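/- arXiv:2205.13287 — 11 statements merged into one kernel-verified Lean document; each statement's English description precedes it below -/
import Mathlib

section
/- Let M be a metric space. If M is unbounded or not uniformly discrete, then M has the sequential strong long trapezoid property (seq-SLTP). -/
/-!
Take for `A` an annulus `{x | L < d(x, c) < H}` around a point `c` (of `M` or of its completion),
or a small ball around `c = u`, containing two distinct points `u, v` whose distances to `c` lie
deep inside `(L, H)`: `2L ≤ ε d(u, c)` and `2 d(u, c) ≤ ε H`. For `x ∉ A` this gives
`d(x, u) ≥ (1 - ε)(d(x, c) + d(u, c))`, and the triangle inequality through `c` yields both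
trapezoid inequalities. Infinitely many disjoint such sets are found going off to infinity if `M`
is unbounded, shrinking to an accumulation point of `M` in its completion if there is one, and
otherwise as small balls around the first points of close pairs chosen `η`-separated.
-/

/-- A metric space `M` has the *sequential strong long trapezoid property* (seq-SLTP) if for
every `ε > 0` there exist pairwise disjoint subsets `A 0, A 1, …` of `M` such that, for every
`m`, there are `u, v ∈ A m` with `u ≠ v` satisfying the long trapezoid inequalities for all
points outside `A m`. -/
def SeqSLTP (M : Type*) [MetricSpace M] : Prop :=
  ∀ ε : ℝ, 0 < ε → ∃ A : ℕ → Set M,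
    (Pairwise fun m k => Disjoint (A m) (A k)) ∧
    ∀ m : ℕ, ∃ u ∈ A m, ∃ v ∈ A m, u ≠ v ∧
      (∀ x ∉ A m, ∀ y ∉ A m,
        (1 - ε) * (dist x y + dist u v) ≤ dist x u + dist y v) ∧
      (∀ x ∉ A m, ∀ y ∉ A m, ∀ z ∉ A m, ∀ w ∉ A m,
        (1 - ε) * (dist x y + dist z w + 2 * dist u v) ≤
          dist x u + dist y u + dist z v + dist w v)

open Set Filter Topology Metric Bornology Function

section

variable {M Y : Type*} [PseudoMetricSpace M] [PseudoMetricSpace Y] {ε : ℝ}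

def IsTrapezoidSet (ε : ℝ) (A : Set M) : Prop :=
  ∃ u ∈ A, ∃ v ∈ A, u ≠ v ∧
    (∀ x ∉ A, ∀ y ∉ A,
      (1 - ε) * (dist x y + dist u v) ≤ dist x u + dist y v) ∧
    (∀ x ∉ A, ∀ y ∉ A, ∀ z ∉ A, ∀ w ∉ A,
      (1 - ε) * (dist x y + dist z w + 2 * dist u v) ≤
        dist x u + dist y u + dist z v + dist w v)

theorem IsTrapezoidSet.mono {ε' : ℝ} {A : Set M} (h : IsTrapezoidSet ε A) (hε : ε ≤ ε') :
    IsTrapezoidSet ε' A := by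
  obtain ⟨u, hu, v, hv, huv, h₂, h₄⟩ := h
  refine ⟨u, hu, v, hv, huv, fun x hx y hy => ?_, fun x hx y hy z hz w hw => ?_⟩
  · exact le_trans (by gcongr) (h₂ x hx y hy)
  · exact le_trans (by gcongr) (h₄ x hx y hy z hz w hw)

theorem one_sub_mul_add_le_dist {c x w : Y} {L H : ℝ} (hε : 0 ≤ ε)
    (hx : dist x c ∉ Ioo L H) (hL : 2 * L ≤ ε * dist w c) (hH : 2 * dist w c ≤ ε * H) :
    (1 - ε) * (dist x c + dist w c) ≤ dist x w := by
  have hεx := mul_nonneg hε (dist_nonneg (x := x) (y := c))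
  have hεw := mul_nonneg hε (dist_nonneg (x := w) (y := c))
  rcases not_and_or.1 hx with hx | hx <;> rw [not_lt] at hx
  · linarith [dist_triangle w x c, dist_comm x w]
  · nlinarith [dist_triangle x w c]

theorem isTrapezoidSet_of_dist_notMem_Ioo {f : M → Y} (hf : Isometry f) {c : Y} {A : Set M}
    {L H : ℝ} (hε : 0 ≤ ε) (hε1 : ε ≤ 1) (hA : ∀ x ∉ A, dist (f x) c ∉ Ioo L H) {u v : M}
    (hu : u ∈ A) (hv : v ∈ A) (huv : u ≠ v)
    (hLu : 2 * L ≤ ε * dist (f u) c) (hHu : 2 * dist (f u) c ≤ ε * H)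
    (hLv : 2 * L ≤ ε * dist (f v) c) (hHv : 2 * dist (f v) c ≤ ε * H) :
    IsTrapezoidSet ε A := by
  have near_u : ∀ x ∉ A, (1 - ε) * (dist (f x) c + dist (f u) c) ≤ dist x u := fun x hx =>
    hf.dist_eq x u ▸ one_sub_mul_add_le_dist hε (hA x hx) hLu hHu
  have near_v : ∀ x ∉ A, (1 - ε) * (dist (f x) c + dist (f v) c) ≤ dist x v := fun x hx =>
    hf.dist_eq x v ▸ one_sub_mul_add_le_dist hε (hA x hx) hLv hHv
  have tri : ∀ x y, dist x y ≤ dist (f x) c + dist (f y) c := fun x y =>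
    hf.dist_eq x y ▸ dist_triangle_right _ _ c
  have hε' : 0 ≤ 1 - ε := sub_nonneg.2 hε1
  refine ⟨u, hu, v, hv, huv, fun x hx y hy => ?_, fun x hx y hy z hz w hw => ?_⟩
  · calc (1 - ε) * (dist x y + dist u v)
        ≤ (1 - ε) * ((dist (f x) c + dist (f u) c) + (dist (f y) c + dist (f v) c)) :=
          mul_le_mul_of_nonneg_left (by linarith [tri x y, tri u v]) hε'
      _ ≤ dist x u + dist y v := by linarith [near_u x hx, near_v y hy]
  · calc (1 - ε) * (dist x y + dist z w + 2 * dist u v)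
        ≤ (1 - ε) * ((dist (f x) c + dist (f u) c) + (dist (f y) c + dist (f u) c) +
            (dist (f z) c + dist (f v) c) + (dist (f w) c + dist (f v) c)) :=
          mul_le_mul_of_nonneg_left (by linarith [tri x y, tri z w, tri u v]) hε'
      _ ≤ dist x u + dist y u + dist z v + dist w v := by
          linarith [near_u x hx, near_u y hy, near_v z hz, near_v w hw]

theorem isTrapezoidSet_annulus {f : M → Y} (hf : Isometry f) {c : Y} {u v : M}
    (hε : 0 < ε) (hε1 : ε ≤ 1) (hu : 0 < dist (f u) c) (huv : dist (f u) c < dist (f v) c) :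
    IsTrapezoidSet ε {x | dist (f x) c ∈ Ioo (ε * dist (f u) c / 2) (2 * dist (f v) c / ε)} := by
  have hH : ε * (2 * dist (f v) c / ε) = 2 * dist (f v) c := by field_simp
  have hv_lt : dist (f v) c < 2 * dist (f v) c / ε := by
    rw [lt_div_iff₀ hε]; nlinarith
  have hu_mem : dist (f u) c ∈ Ioo (ε * dist (f u) c / 2) (2 * dist (f v) c / ε) :=
    ⟨by nlinarith, huv.trans hv_lt⟩
  have hv_mem : dist (f v) c ∈ Ioo (ε * dist (f u) c / 2) (2 * dist (f v) c / ε) :=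
    ⟨by nlinarith, hv_lt⟩
  refine isTrapezoidSet_of_dist_notMem_Ioo hf hε.le hε1 (fun x hx => hx) hu_mem hv_mem
    (fun h => huv.ne (congrArg (fun p => dist (f p) c) h)) ?_ ?_ ?_ ?_ <;> nlinarith

theorem exists_seq_isTrapezoidSet (P : Set M → Prop)
    (h : ∀ s : Finset (Set M), (∀ A ∈ s, P A) →
      ∃ B, P B ∧ IsTrapezoidSet ε B ∧ ∀ A ∈ s, Disjoint A B) :
    ∃ A : ℕ → Set M, Pairwise (Disjoint on A) ∧ ∀ m, IsTrapezoidSet ε (A m) := by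
  obtain ⟨A, hA, hdisj⟩ := exists_seq_of_forall_finset_exists' (fun B => P B ∧ IsTrapezoidSet ε B)
    Disjoint fun s hs => by
      obtain ⟨B, hPB, hB, hdisj⟩ := h s fun A hA => (hs A hA).1
      exact ⟨B, ⟨hPB, hB⟩, hdisj⟩
  exact ⟨A, hdisj, fun m => (hA m).2⟩

theorem exists_seq_isTrapezoidSet_of_filter (F : Filter M)
    (h : ∀ S ∈ F, ∃ B ⊆ S, Bᶜ ∈ F ∧ IsTrapezoidSet ε B) :
    ∃ A : ℕ → Set M, Pairwise (Disjoint on A) ∧ ∀ m, IsTrapezoidSet ε (A m) :=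
  exists_seq_isTrapezoidSet (fun B => Bᶜ ∈ F) fun s hs => by
    obtain ⟨B, hBS, hB, hT⟩ := h (⋂ A ∈ s, Aᶜ) ((biInter_finset_mem s).2 hs)
    exact ⟨B, hB, hT, fun A hA => subset_compl_iff_disjoint_left.1
      (hBS.trans (biInter_subset_of_mem hA))⟩

theorem exists_seq_isTrapezoidSet_of_not_isBounded (hε : 0 < ε) (hε1 : ε ≤ 1)
    (hM : ¬ IsBounded (univ : Set M)) :
    ∃ A : ℕ → Set M, Pairwise (Disjoint on A) ∧ ∀ m, IsTrapezoidSet ε (A m) := by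
  obtain ⟨x₀⟩ : Nonempty M := by
    by_contra h
    exact hM (by simp [univ_eq_empty_iff.2 (not_nonempty_iff.1 h)])
  have far : ∀ R, ∃ p, R < dist p x₀ := fun R => by
    by_contra! h
    exact hM (isBounded_closedBall.subset fun p _ => mem_closedBall.2 (h p))
  refine exists_seq_isTrapezoidSet_of_filter (cobounded M) fun S hS => ?_
  obtain ⟨R, hR⟩ := (isBounded_iff_subset_closedBall x₀).1 (isBounded_compl_iff.2 hS)
  obtain ⟨u, hu⟩ := far (2 * |R| / ε)
  obtain ⟨v, hv⟩ := far (dist u x₀)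
  have hu₀ : 0 < dist u x₀ := lt_of_le_of_lt (by positivity) hu
  have hRu : R < ε * dist u x₀ / 2 := by
    rw [div_lt_iff₀ hε] at hu
    linarith [le_abs_self R]
  refine ⟨_, fun x hx => ?_, ?_, isTrapezoidSet_annulus isometry_id hε hε1 hu₀ hv⟩
  · by_contra hxS
    have := mem_closedBall.1 (hR hxS)
    exact (hx.1.trans_le this).not_ge hRu.le
  · exact isBounded_def.1 <| isBounded_ball.subset fun x hx => mem_ball.2 hx.2

theorem exists_seq_isTrapezoidSet_of_accPt {X : Type*} [MetricSpace X] (hε : 0 < ε)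
    (hε1 : ε ≤ 1) {f : M → X} (hf : Isometry f) {ω : X} (hω : AccPt ω (𝓟 (range f))) :
    ∃ A : ℕ → Set M, Pairwise (Disjoint on A) ∧ ∀ m, IsTrapezoidSet ε (A m) := by
  have near : ∀ r > 0, ∃ p, 0 < dist (f p) ω ∧ dist (f p) ω < r := fun r hr => by
    obtain ⟨_, ⟨hr, p, rfl⟩, hp⟩ := accPt_iff_nhds.1 hω _ (ball_mem_nhds ω hr)
    exact ⟨p, dist_pos.2 hp, hr⟩
  refine exists_seq_isTrapezoidSet_of_filter (comap f (𝓝 ω)) fun S hS => ?_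
  obtain ⟨r, hr, hrS⟩ := (nhds_basis_ball.comap f).mem_iff.1 hS
  obtain ⟨v, hv₀, hvr⟩ := near (ε * r / 2) (by positivity)
  obtain ⟨u, hu₀, huv⟩ := near (dist (f v) ω) hv₀
  refine ⟨_, fun x hx => hrS ?_, ?_, isTrapezoidSet_annulus hf hε hε1 hu₀ huv⟩
  · have : 2 * dist (f v) ω / ε < r := by rw [div_lt_iff₀ hε]; linarith
    exact mem_ball.2 (hx.2.trans this)
  · exact mem_comap.2 ⟨_, ball_mem_nhds ω (by positivity), fun x hx hxA => hxA.1.not_gt hx⟩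

theorem exists_seq_isTrapezoidSet_of_far_pairs (hε : 0 < ε) (hε1 : ε ≤ 1) {η : ℝ} (hη : 0 < η)
    (hfar : ∀ t : Finset M, ∀ δ > 0, ∃ a b, a ≠ b ∧ dist a b < δ ∧ ∀ p ∈ t, η ≤ dist a p) :
    ∃ A : ℕ → Set M, Pairwise (Disjoint on A) ∧ ∀ m, IsTrapezoidSet ε (A m) := by
  classical
  have : Nonempty M := let ⟨a, _⟩ := hfar ∅ 1 one_pos; ⟨a⟩
  refine exists_seq_isTrapezoidSet (fun A => ∃ p, A ⊆ ball p (η / 4)) fun s hs => ?_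
  choose! c hc using hs
  obtain ⟨a, b, hab, hd, hfar⟩ := hfar (s.image c) (ε * η / 8) (by positivity)
  rw [dist_comm] at hd
  have hba : dist b a < η / 4 := by nlinarith
  refine ⟨ball a (η / 4), ⟨a, subset_rfl⟩, ?_, fun A hA => ?_⟩
  · refine isTrapezoidSet_of_dist_notMem_Ioo (L := 0) isometry_id hε.le hε1
      (fun x hx hxI => hx (mem_ball.2 hxI.2)) (mem_ball_self (by positivity)) (mem_ball.2 hba)
      hab ?_ ?_ ?_ ?_ <;> simp only [id, dist_self] <;> nlinarith [dist_nonneg (x := b) (y := a)]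
  · have := hfar (c A) (Finset.mem_image_of_mem c hA)
    exact (ball_disjoint_ball (by rw [dist_comm]; linarith)).mono_left (hc A hA)

end

section

variable {M : Type*} [MetricSpace M]

theorem exists_far_pairs_of_not_totallyBounded {x y : ℕ → M}
    (hTB : ¬ TotallyBounded (range x)) (hxy : ∀ n, x n ≠ y n)
    (hd : Tendsto (fun n => dist (x n) (y n)) atTop (𝓝 0)) :
    ∃ η > 0, ∀ t : Finset M, ∀ δ > 0, ∃ a b, a ≠ b ∧ dist a b < δ ∧ ∀ p ∈ t, η ≤ dist a p := by
  rw [totallyBounded_iff] at hTB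
  push Not at hTB
  obtain ⟨η, hη, hcov⟩ := hTB
  refine ⟨η, hη, fun t δ hδ => ?_⟩
  obtain ⟨N, hN⟩ := eventually_atTop.1 ((tendsto_order.1 hd).2 δ hδ)
  -- Also avoiding `x 0, …, x (N - 1)` forces the index of the new point to be at least `N`.
  obtain ⟨_, ⟨n, rfl⟩, hn⟩ :=
    not_subset.1 (hcov (↑t ∪ x '' Iio N) (t.finite_toSet.union ((finite_Iio N).image x)))
  simp only [mem_iUnion₂, mem_ball, not_exists, not_lt] at hn
  have hNn : N ≤ n := by
    by_contra! h
    linarith [dist_self (x n) ▸ hn (x n) (Or.inr ⟨n, h, rfl⟩)]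
  exact ⟨x n, y n, hxy n, hN n hNn, fun p hp => hn p (Or.inl hp)⟩

theorem accPt_range_of_mapClusterPt {X ι : Type*} [PseudoMetricSpace X]
    {l : Filter ι} {f : M → X} (hf : Isometry f) {x y : ι → M} (hxy : ∀ n, x n ≠ y n)
    (hd : Tendsto (fun n => dist (x n) (y n)) l (𝓝 0)) {ω : X}
    (hω : MapClusterPt ω l (f ∘ x)) : AccPt ω (𝓟 (range f)) := by
  refine accPt_iff_nhds.2 fun U hU => ?_
  obtain ⟨r, hr, hrU⟩ := Metric.mem_nhds_iff.1 hU
  obtain ⟨n, hxn, hyn⟩ :=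
    ((mapClusterPt_iff_frequently.1 hω _ (ball_mem_nhds ω (half_pos hr))).and_eventually
      ((tendsto_order.1 hd).2 _ (half_pos hr))).exists
  replace hxn : dist (f (x n)) ω < r / 2 := hxn
  have hyn : dist (f (y n)) ω < r := by
    linarith [dist_triangle (f (y n)) (f (x n)) ω, hf.dist_eq (y n) (x n), dist_comm (x n) (y n)]
  by_cases hxω : f (x n) = ω
  · exact ⟨f (y n), ⟨hrU (mem_ball.2 hyn), mem_range_self _⟩,
      hxω ▸ hf.injective.ne (hxy n).symm⟩
  · exact ⟨f (x n), ⟨hrU (mem_ball.2 (by linarith)), mem_range_self _⟩, hxω⟩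

open UniformSpace in
theorem exists_accPt_completion_or_far_pairs
    (hM : ∀ δ > 0, ∃ x y : M, x ≠ y ∧ dist x y < δ) :
    (∃ ω : Completion M, AccPt ω (𝓟 (range ((↑) : M → Completion M)))) ∨
      ∃ η > 0, ∀ t : Finset M, ∀ δ > 0, ∃ a b, a ≠ b ∧ dist a b < δ ∧ ∀ p ∈ t, η ≤ dist a p := by
  choose x y hxy hlt using fun n : ℕ => hM (1 / (n + 1)) (by positivity)
  have hd : Tendsto (fun n => dist (x n) (y n)) atTop (𝓝 0) :=
    squeeze_zero (fun _ => dist_nonneg) (fun n => (hlt n).le) tendsto_one_div_add_atTop_nhds_zero_nat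
  by_cases hTB : TotallyBounded (range x)
  · left
    have hK : IsCompact (closure ((↑) '' range x : Set (Completion M))) :=
      (hTB.image (Completion.uniformContinuous_coe M)).closure.isCompact_of_isClosed
        isClosed_closure
    obtain ⟨ω, -, hω⟩ := hK.exists_mapClusterPt (f := atTop) (u := (↑) ∘ x)
      (tendsto_principal.2 (Eventually.of_forall fun n =>
        subset_closure (mem_image_of_mem _ (mem_range_self n))))
    exact ⟨ω, accPt_range_of_mapClusterPt Completion.coe_isometry hxy hd hω⟩
  · exact .inr (exists_far_pairs_of_not_totallyBounded hTB hxy hd)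

theorem seqSLTP_of_forall_le_one
    (h : ∀ ε, 0 < ε → ε ≤ 1 →
      ∃ A : ℕ → Set M, Pairwise (Disjoint on A) ∧ ∀ m, IsTrapezoidSet ε (A m)) :
    SeqSLTP M := fun ε hε => by
  obtain ⟨A, hA, hT⟩ := h (min ε 1) (lt_min hε one_pos) (min_le_right ε 1)
  exact ⟨A, hA, fun m => (hT m).mono (min_le_left ε 1)⟩

end

/-- If a metric space `M` is unbounded or not uniformly discrete, then `M` has the seq-SLTP. -/
theorem unbounded_or_not_uniformlyDiscrete_seqSLTP (M : Type*) [MetricSpace M]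
    (h : (∀ r : ℝ, 0 < r → ∃ x y : M, r < dist x y) ∨
      ¬ ∃ ε : ℝ, 0 < ε ∧ ∀ x y : M, x ≠ y → ε ≤ dist x y) :
    SeqSLTP M := by
  refine seqSLTP_of_forall_le_one fun ε hε hε1 => ?_
  rcases h with hunb | hnd
  · refine exists_seq_isTrapezoidSet_of_not_isBounded hε hε1 fun hb => ?_
    obtain ⟨C, hC⟩ := Metric.isBounded_iff.1 hb
    obtain ⟨x, y, hxy⟩ := hunb (max C 1) (by positivity)
    exact (hC (mem_univ x) (mem_univ y)).not_gt ((le_max_left C 1).trans_lt hxy)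
  · push Not at hnd
    rcases exists_accPt_completion_or_far_pairs hnd with ⟨ω, hω⟩ | ⟨η, hη, hfar⟩
    · exact exists_seq_isTrapezoidSet_of_accPt hε hε1 UniformSpace.Completion.coe_isometry hω
    · exact exists_seq_isTrapezoidSet_of_far_pairs hε hε1 hη hfar
end

section
/- Every unbounded metric space has the sequential strong long trapezoid property (seq-SLTP). -/
set_option maxHeartbeats 1000000 in
/-- Every unbounded metric space has the seq-SLTP. -/
theorem unbounded_seqSLTP (M : Type*) [MetricSpace M]
    (h : ∀ r : ℝ, 0 < r → ∃ x y : M, r < dist x y) :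
    SeqSLTP M := by
  classical
  intro ε hε
  obtain ⟨o, -, -⟩ := h 1 one_pos
  set e : ℝ := min ε (1/2) with he_def
  have he0 : 0 < e := lt_min hε (by norm_num)
  have he2 : e ≤ 1/2 := min_le_right _ _
  have heε : e ≤ ε := min_le_left _ _
  set c : ℝ := 8 / e with hc_def
  have hc8 : e * c = 8 := by
    rw [hc_def]; field_simp
  have hc16 : 16 ≤ c := by
    rw [hc_def, le_div_iff₀ he0]; linarith
  have hc0 : 0 < c := by linarith
  clear_value e c
  -- from unboundedness: points far from any fixed point
  have key : ∀ (p : M) (r : ℝ), 0 < r → ∃ z : M, r < dist p z := by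
    intro p r hr
    obtain ⟨x, y, hxy⟩ := h (2 * r) (by linarith)
    by_contra hcon
    push_neg at hcon
    have h1 := hcon x
    have h2 := hcon y
    have h3 := dist_triangle x p y
    have h4 : dist x p = dist p x := dist_comm x p
    linarith
  -- for every positive R there are two distinct points both at distance > c*R from o
  have pairE : ∀ R : ℝ, ∃ uv : M × M, 0 < R →
      uv.1 ≠ uv.2 ∧ c * R < dist o uv.1 ∧ c * R < dist o uv.2 := by
    intro R
    by_cases hR : 0 < R
    · have hcR : 0 < c * R := mul_pos hc0 hR
      obtain ⟨p, hp⟩ := key o (c * R) hcR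
      have hpos : 0 < dist o p + c * R := by linarith [dist_nonneg (x := o) (y := p)]
      obtain ⟨q, hq⟩ := key p (dist o p + c * R) hpos
      refine ⟨(p, q), fun _ => ⟨?_, hp, ?_⟩⟩
      · intro hpq
        have hpq' : p = q := hpq
        rw [hpq'] at hq
        simp at hq
        linarith [dist_nonneg (x := o) (y := q)]
      · have h3 := dist_triangle p o q
        have h4 : dist p o = dist o p := dist_comm p o
        simp only []
        linarith
    · exact ⟨(o, o), fun h' => absurd h' hR⟩
  choose f hf using pairE
  obtain ⟨T, hT0, hTs⟩ : ∃ T : ℕ → ℝ, T 0 = 1 ∧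
      ∀ m, T (m+1) = c * max (dist o (f (T m)).1) (dist o (f (T m)).2) :=
    ⟨fun n => Nat.rec 1 (fun _ R => c * max (dist o (f R).1) (dist o (f R).2)) n,
      rfl, fun _ => rfl⟩
  have hTpos : ∀ m, 0 < T m := by
    intro m
    induction m with
    | zero => rw [hT0]; norm_num
    | succ n ih =>
      have h1 := (hf (T n) ih).2.1
      have h2 : c * T n < max (dist o (f (T n)).1) (dist o (f (T n)).2) :=
        lt_of_lt_of_le h1 (le_max_left _ _)
      have h3 : 0 < max (dist o (f (T n)).1) (dist o (f (T n)).2) := by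
        nlinarith
      rw [hTs]
      exact mul_pos hc0 h3
  have hSgt : ∀ m, c * T m < max (dist o (f (T m)).1) (dist o (f (T m)).2) :=
    fun m => lt_of_lt_of_le (hf (T m) (hTpos m)).2.1 (le_max_left _ _)
  have hTlt : ∀ m, T m < T (m+1) := by
    intro m
    have h1 := hSgt m
    have h2 := hTpos m
    rw [hTs]
    have h5 : 16 * T m ≤ c * T m := mul_le_mul_of_nonneg_right hc16 h2.le
    have h6 : c * (c * T m) < c * (max (dist o (f (T m)).1) (dist o (f (T m)).2)) :=
      mul_lt_mul_of_pos_left h1 hc0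
    have h7 : 16 * (c * T m) ≤ c * (c * T m) := by
      apply mul_le_mul_of_nonneg_right hc16
      nlinarith
    linarith
  have hTmono : StrictMono T := strictMono_nat_of_lt_succ hTlt
  refine ⟨fun m => {x | T m < dist o x ∧ dist o x < T (m+1)}, ?_, ?_⟩
  · have hdisj : ∀ m k, m < k →
        Disjoint {x : M | T m < dist o x ∧ dist o x < T (m+1)}
          {x : M | T k < dist o x ∧ dist o x < T (k+1)} := by
      intro m k hmk
      rw [Set.disjoint_left]
      intro x hxm hxk
      have h1 : dist o x < T (m+1) := hxm.2
      have h2 : T k < dist o x := hxk.1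
      have h3 : T (m+1) ≤ T k := hTmono.monotone (Nat.succ_le_of_lt hmk)
      linarith
    intro m k hmk
    rcases hmk.lt_or_gt with hlt | hlt
    · exact hdisj m k hlt
    · exact (hdisj k m hlt).symm
  · intro m
    set u : M := (f (T m)).1 with hu_def
    set v : M := (f (T m)).2 with hv_def
    set S : ℝ := max (dist o u) (dist o v) with hS_def
    have hfm := hf (T m) (hTpos m)
    have hum : c * T m < dist o u := hfm.2.1
    have hvm : c * T m < dist o v := hfm.2.2
    have huS : dist o u ≤ S := le_max_left _ _
    have hvS : dist o v ≤ S := le_max_right _ _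
    have hTm := hTpos m
    have hSpos : 0 < S := by nlinarith
    have hTsm : T (m+1) = c * S := hTs m
    have hne : u ≠ v := hfm.1
    clear_value u v S
    have humem : u ∈ {x : M | T m < dist o x ∧ dist o x < T (m+1)} := by
      constructor
      · nlinarith
      · rw [hTsm]; nlinarith
    have hvmem : v ∈ {x : M | T m < dist o x ∧ dist o x < T (m+1)} := by
      constructor
      · nlinarith
      · rw [hTsm]; nlinarith
    have star : ∀ p : M, p ∉ {x : M | T m < dist o x ∧ dist o x < T (m+1)} →
        ∀ q : M, c * T m < dist o q → dist o q ≤ S →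
        (1 - e) * (dist p o + dist o q) ≤ dist p q := by
      intro p hp q hq1 hq2
      have hpA : dist o p ≤ T m ∨ T (m+1) ≤ dist o p := by
        rcases le_or_gt (dist o p) (T m) with h1 | h1
        · exact Or.inl h1
        · rcases lt_or_ge (dist o p) (T (m+1)) with h2 | h2
          · exact absurd ⟨h1, h2⟩ hp
          · exact Or.inr h2
      have htri1 : dist o q ≤ dist o p + dist p q := dist_triangle o p q
      have htri2 : dist o p ≤ dist o q + dist p q := by
        have := dist_triangle o q p
        have hc' : dist q p = dist p q := dist_comm q p
        linarith
      have hcomm : dist p o = dist o p := dist_comm p o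
      have hdp0 : 0 ≤ dist o p := dist_nonneg
      have hdq0 : 0 ≤ dist o q := dist_nonneg
      rcases hpA with hle | hge
      · -- p close to o
        have h8 : 8 * T m < e * dist o q := by nlinarith
        nlinarith [mul_nonneg he0.le hdp0]
      · -- p far from o
        rw [hTsm] at hge
        have h8 : 8 * S ≤ e * dist o p := by nlinarith
        nlinarith [mul_nonneg he0.le hdq0]
    refine ⟨u, humem, v, hvmem, hne, ?_, ?_⟩
    · intro x hx y hy
      have s1 := star x hx u hum huS
      have s2 := star y hy v hvm hvS
      have t1 : dist x y ≤ dist x o + dist o y := dist_triangle x o y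
      have t2 : dist u v ≤ dist u o + dist o v := dist_triangle u o v
      have c1 : dist o y = dist y o := dist_comm o y
      have c2 : dist u o = dist o u := dist_comm u o
      have hsum : 0 ≤ dist x y + dist u v := by positivity
      calc (1 - ε) * (dist x y + dist u v)
          ≤ (1 - e) * (dist x y + dist u v) := by nlinarith
        _ ≤ (1 - e) * ((dist x o + dist o u) + (dist y o + dist o v)) := by
            have h1 : dist x y + dist u v ≤
                (dist x o + dist o u) + (dist y o + dist o v) := by linarith
            have h2 : (0:ℝ) ≤ 1 - e := by linarith
            nlinarith
        _ = (1 - e) * (dist x o + dist o u) + (1 - e) * (dist y o + dist o v) := by ring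
        _ ≤ dist x u + dist y v := by linarith
    · intro x hx y hy z hz w hw
      have s1 := star x hx u hum huS
      have s2 := star y hy u hum huS
      have s3 := star z hz v hvm hvS
      have s4 := star w hw v hvm hvS
      have t1 : dist x y ≤ dist x o + dist o y := dist_triangle x o y
      have t2 : dist z w ≤ dist z o + dist o w := dist_triangle z o w
      have t3 : dist u v ≤ dist u o + dist o v := dist_triangle u o v
      have c1 : dist o y = dist y o := dist_comm o y
      have c2 : dist o w = dist w o := dist_comm o w
      have c3 : dist u o = dist o u := dist_comm u o
      have hsum : 0 ≤ dist x y + dist z w + 2 * dist u v := by positivity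
      calc (1 - ε) * (dist x y + dist z w + 2 * dist u v)
          ≤ (1 - e) * (dist x y + dist z w + 2 * dist u v) := by nlinarith
        _ ≤ (1 - e) * ((dist x o + dist o u) + (dist y o + dist o u)
              + (dist z o + dist o v) + (dist w o + dist o v)) := by
            have h1 : dist x y + dist z w + 2 * dist u v ≤
                (dist x o + dist o u) + (dist y o + dist o u)
                + (dist z o + dist o v) + (dist w o + dist o v) := by linarith
            have h2 : (0:ℝ) ≤ 1 - e := by linarith
            nlinarith
        _ = (1 - e) * (dist x o + dist o u) + (1 - e) * (dist y o + dist o u)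
              + (1 - e) * (dist z o + dist o v) + (1 - e) * (dist w o + dist o v) := by ring
        _ ≤ dist x u + dist y u + dist z v + dist w v := by linarith
end

section
/- Every metric space M that has a limit point p ∈ M (i.e., every open ball centered at p contains a point of M different from p) has the sequential strong long trapezoid property (seq-SLTP). -/
set_option maxHeartbeats 800000


/-- Every metric space with a limit point has the seq-SLTP. -/
theorem limitPoint_seqSLTP (M : Type*) [MetricSpace M] (p : M)
    (hp : ∀ r : ℝ, 0 < r → ∃ x : M, x ≠ p ∧ dist x p < r) :
    SeqSLTP M := by
  intro ε hε
  obtain ⟨q0, hq0, -⟩ := hp 1 one_pos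
  set ε' : ℝ := min ε (1/2) with hε'def
  have hε'pos : 0 < ε' := lt_min hε (by norm_num)
  have hε'le : ε' ≤ 1/2 := min_le_right _ _
  have hε'ε : ε' ≤ ε := min_le_left _ _
  have hstep : ∀ x : {y : M // y ≠ p}, ∃ y : M, y ≠ p ∧ dist y p < ε'^2/24 * dist x.1 p := by
    intro x
    exact hp _ (mul_pos (by positivity) (dist_pos.2 x.2))
  let f : {y : M // y ≠ p} → {y : M // y ≠ p} :=
    fun x => ⟨(hstep x).choose, (hstep x).choose_spec.1⟩
  let Q : ℕ → {y : M // y ≠ p} := fun n => f^[n] ⟨q0, hq0⟩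
  set D : ℕ → ℝ := fun n => dist (Q n).1 p with hD
  have hDval : ∀ n, D n = dist (Q n).1 p := fun n => rfl
  have hDpos : ∀ n, 0 < D n := fun n => dist_pos.2 (Q n).2
  have hDstep : ∀ n, D (n+1) < ε'^2/24 * D n := by
    intro n
    have h1 : Q (n+1) = f (Q n) := Function.iterate_succ_apply' f n _
    have h2 := (hstep (Q n)).choose_spec.2
    rw [hDval, hDval, h1]
    exact h2
  have hκ1 : ε'^2/24 ≤ 1 := by nlinarith [mul_le_mul_of_nonneg_right hε'le hε'pos.le]
  have hDmono : StrictAnti D := strictAnti_nat_of_succ_lt (by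
    intro n
    have h := hDstep n
    have h2 : ε'^2/24 * D n ≤ 1 * D n := mul_le_mul_of_nonneg_right hκ1 (hDpos n).le
    linarith)
  set A : ℕ → Set M :=
    fun m => {x : M | ε' * D (2*m+1) / 6 ≤ dist x p ∧ dist x p ≤ 4 * D (2*m) / ε'} with hA
  refine ⟨A, ?_, ?_⟩
  · -- pairwise disjoint
    have hdis : ∀ m k, m < k → Disjoint (A m) (A k) := by
      intro m k hmk
      rw [Set.disjoint_left]
      intro x hxm hxk
      rw [hA] at hxm hxk
      have h1 : D (2*k) ≤ D (2*m+2) := hDmono.antitone (by omega)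
      have h2 : D (2*m+2) < ε'^2/24 * D (2*m+1) := hDstep _
      have h3 : 4 * D (2*k) / ε' < ε' * D (2*m+1) / 6 := by
        rw [div_lt_iff₀ hε'pos]
        nlinarith [hDpos (2*m+1), hε'pos]
      have := hxm.1
      have := hxk.2
      linarith [hxm.1, hxk.2]
    intro m k hmk
    rcases hmk.lt_or_gt with h | h
    · exact hdis m k h
    · exact (hdis k m h).symm
  · intro m
    have hδpos : 0 < D (2*m) := hDpos _
    have hηpos : 0 < D (2*m+1) := hDpos _
    have hstep1 : D (2*m+1) < ε'^2/24 * D (2*m) := hDstep (2*m)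
    have hηltδ : D (2*m+1) < D (2*m) := hDmono (by omega)
    have hηδ : D (2*m+1) ≤ ε' * D (2*m) / 2 := by
      nlinarith [mul_pos hε'pos hδpos, hε'le, hstep1]
    have key : (1-ε') * (D (2*m) + D (2*m+1)) + 3 * (ε' * D (2*m+1) / 6) ≤ D (2*m) := by
      nlinarith [hηδ, mul_pos hε'pos hηpos, mul_pos hε'pos hδpos]
    -- helper lower bounds
    have hu : ∀ q : M, q ∉ A m →
        (1-ε') * dist q p + (D (2*m) - 2*(ε' * D (2*m+1)/6)) ≤ dist q (Q (2*m)).1 := by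
      intro q hq
      have hq' : dist q p < ε' * D (2*m+1)/6 ∨ 4 * D (2*m) / ε' < dist q p := by
        by_contra hc
        push_neg at hc
        exact hq ⟨hc.1, hc.2⟩
      have t1 : D (2*m) - dist q p ≤ dist q (Q (2*m)).1 := by
        have h := dist_triangle (Q (2*m)).1 q p
        rw [dist_comm (Q (2*m)).1 q] at h
        rw [hDval]; linarith
      have t2 : dist q p - D (2*m) ≤ dist q (Q (2*m)).1 := by
        have h := dist_triangle q (Q (2*m)).1 p
        rw [hDval]; linarith
      rcases hq' with h | h
      · nlinarith [t1, mul_nonneg hε'pos.le (dist_nonneg (x := q) (y := p)), hηpos, hε'pos]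
      · have t3 : 4 * D (2*m) < ε' * dist q p := by
          have h4 := (div_lt_iff₀ hε'pos).1 h
          linarith
        nlinarith [t2, t3, hδpos, mul_nonneg hε'pos.le hηpos.le]
    have hv : ∀ q : M, q ∉ A m →
        (1-ε') * dist q p - ε' * D (2*m+1)/6 ≤ dist q (Q (2*m+1)).1 := by
      intro q hq
      have hq' : dist q p < ε' * D (2*m+1)/6 ∨ 4 * D (2*m) / ε' < dist q p := by
        by_contra hc
        push_neg at hc
        exact hq ⟨hc.1, hc.2⟩
      have t2 : dist q p - D (2*m+1) ≤ dist q (Q (2*m+1)).1 := by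
        have h := dist_triangle q (Q (2*m+1)).1 p
        rw [hDval]; linarith
      rcases hq' with h | h
      · nlinarith [dist_nonneg (x := q) (y := (Q (2*m+1)).1),
          mul_nonneg hε'pos.le (dist_nonneg (x := q) (y := p)), hηpos, hε'pos]
      · have t3 : 4 * D (2*m) < ε' * dist q p := by
          have h4 := (div_lt_iff₀ hε'pos).1 h
          linarith
        nlinarith [t2, t3, hδpos, hηltδ, mul_nonneg hε'pos.le hηpos.le]
    have hmemu : (Q (2*m)).1 ∈ A m := by
      rw [hA]
      refine ⟨?_, ?_⟩
      · rw [← hDval]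
        nlinarith [hηpos, hε'le, hηltδ, hε'pos]
      · rw [← hDval, le_div_iff₀ hε'pos]
        nlinarith [hδpos, hε'le, hε'pos]
    have hmemv : (Q (2*m+1)).1 ∈ A m := by
      rw [hA]
      refine ⟨?_, ?_⟩
      · rw [← hDval]
        nlinarith [hηpos, hε'le, hε'pos]
      · rw [← hDval, le_div_iff₀ hε'pos]
        nlinarith [hδpos, hηpos, hε'le, hε'pos, hηltδ]
    have hne : (Q (2*m)).1 ≠ (Q (2*m+1)).1 := by
      intro h
      have : D (2*m) = D (2*m+1) := by rw [hDval, hDval, h]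
      linarith
    have huv : dist (Q (2*m)).1 (Q (2*m+1)).1 ≤ D (2*m) + D (2*m+1) := by
      rw [hDval, hDval]
      exact dist_triangle_right _ _ _
    refine ⟨(Q (2*m)).1, hmemu, (Q (2*m+1)).1, hmemv, hne, ?_, ?_⟩
    · intro x hx y hy
      have h1 := hu x hx
      have h2 := hv y hy
      have hxy : dist x y ≤ dist x p + dist y p := dist_triangle_right _ _ _
      have hduv : (0:ℝ) ≤ dist (Q (2*m)).1 (Q (2*m+1)).1 := dist_nonneg
      have hdxy : (0:ℝ) ≤ dist x y := dist_nonneg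
      have hstep2 : (1-ε)*(dist x y + dist (Q (2*m)).1 (Q (2*m+1)).1)
          ≤ (1-ε')*(dist x y + dist (Q (2*m)).1 (Q (2*m+1)).1) :=
        mul_le_mul_of_nonneg_right (by linarith) (by linarith)
      have hmul : (1-ε')*(dist x y + dist (Q (2*m)).1 (Q (2*m+1)).1)
          ≤ (1-ε')*((dist x p + dist y p) + (D (2*m) + D (2*m+1))) :=
        mul_le_mul_of_nonneg_left (by linarith) (by linarith)
      nlinarith [hstep2, hmul, h1, h2, key]
    · intro x hx y hy z hz w hw
      have h1 := hu x hx
      have h2 := hu y hy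
      have h3 := hv z hz
      have h4 := hv w hw
      have hxy : dist x y ≤ dist x p + dist y p := dist_triangle_right _ _ _
      have hzw : dist z w ≤ dist z p + dist w p := dist_triangle_right _ _ _
      have hduv : (0:ℝ) ≤ dist (Q (2*m)).1 (Q (2*m+1)).1 := dist_nonneg
      have hdxy : (0:ℝ) ≤ dist x y := dist_nonneg
      have hdzw : (0:ℝ) ≤ dist z w := dist_nonneg
      have hstep2 : (1-ε)*(dist x y + dist z w + 2*dist (Q (2*m)).1 (Q (2*m+1)).1)
          ≤ (1-ε')*(dist x y + dist z w + 2*dist (Q (2*m)).1 (Q (2*m+1)).1) :=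
        mul_le_mul_of_nonneg_right (by linarith) (by linarith)
      have hmul : (1-ε')*(dist x y + dist z w + 2*dist (Q (2*m)).1 (Q (2*m+1)).1)
          ≤ (1-ε')*((dist x p + dist y p) + (dist z p + dist w p)
              + 2*(D (2*m) + D (2*m+1))) :=
        mul_le_mul_of_nonneg_left (by linarith) (by linarith)
      nlinarith [hstep2, hmul, h1, h2, h3, h4, key]
end

section
/- Every metric space M that is not uniformly discrete and has no limit points has the sequential strong long trapezoid property (seq-SLTP). -/
section Auxiliary

open Metric Set

variable {M : Type*} [MetricSpace M]

/-- The cluster around the pair `(c, e)` used in the construction. -/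
def clusterSet (ε : ℝ) (c e : M) : Set M :=
  (Metric.closedBall c (2 / ε * dist c e) \ Metric.ball e (ε * dist c e / 2)) ∪ {e}

lemma left_mem_clusterSet {ε : ℝ} (hε : 0 < ε) (hε2 : ε ≤ 1 / 2) {c e : M} (hne : c ≠ e) :
    c ∈ clusterSet ε c e := by
  have ht : 0 < dist c e := dist_pos.2 hne
  left
  constructor
  · simp only [Metric.mem_closedBall, dist_self]
    positivity
  · simp only [Metric.mem_ball]
    intro h
    nlinarith

lemma right_mem_clusterSet {ε : ℝ} (c e : M) : e ∈ clusterSet ε c e := by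
  right; rfl

lemma clusterSet_subset {ε : ℝ} (hε : 0 < ε) (hε2 : ε ≤ 1 / 2) (c e : M) :
    clusterSet ε c e ⊆ Metric.closedBall c (2 / ε * dist c e) := by
  rintro x (⟨h, -⟩ | rfl)
  · exact h
  · simp only [Metric.mem_closedBall]
    rw [dist_comm]
    have h1 : (1 : ℝ) ≤ 2 / ε := by
      rw [le_div_iff₀ hε]; linarith
    nlinarith [dist_nonneg (x := c) (y := x)]

/-- Every point outside the cluster is either far from `c` or "behind" `e`. -/
lemma cluster_H {ε : ℝ} (hε : 0 < ε) (hε2 : ε ≤ 1 / 2) {c e : M} (hne : c ≠ e)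
    {x : M} (hx : x ∉ clusterSet ε c e) :
    2 * dist c e ≤ ε * dist x c ∨ dist x e + (1 - ε) * dist c e ≤ dist x c := by
  have ht : 0 < dist c e := dist_pos.2 hne
  have hx' : ¬(x ∈ Metric.closedBall c (2 / ε * dist c e) \ Metric.ball e (ε * dist c e / 2))
      ∧ x ≠ e := by
    constructor
    · intro h; exact hx (Or.inl h)
    · intro h; exact hx (Or.inr h)
  by_cases hball : x ∈ Metric.closedBall c (2 / ε * dist c e)
  · -- then x ∈ ball e (ε t / 2)
    have hxe : dist x e < ε * dist c e / 2 := by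
      by_contra hc
      exact hx'.1 ⟨hball, by simpa [Metric.mem_ball] using hc⟩
    right
    have htr : dist c e ≤ dist c x + dist x e := dist_triangle c x e
    rw [dist_comm c x] at htr
    linarith
  · left
    simp only [Metric.mem_closedBall, not_le] at hball
    have := mul_lt_mul_of_pos_left hball hε
    rw [← mul_assoc, mul_div_cancel₀ 2 (ne_of_gt hε)] at this
    linarith

lemma cluster_cond1 {ε : ℝ} (hε : 0 < ε) (hε2 : ε ≤ 1 / 2) {c e : M} (hne : c ≠ e)
    {x y : M} (hx : x ∉ clusterSet ε c e) (hy : y ∉ clusterSet ε c e) :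
    (1 - ε) * (dist x y + dist c e) ≤ dist x c + dist y e := by
  have ht : 0 < dist c e := dist_pos.2 hne
  rcases cluster_H hε hε2 hne hx with hF | hB
  · have h4 : dist x y ≤ dist x c + dist c e + dist e y := dist_triangle4 x c e y
    have h5 : (0:ℝ) ≤ dist y e := dist_nonneg
    have h6 : (0:ℝ) ≤ dist x c := dist_nonneg
    rw [dist_comm e y] at h4
    nlinarith
  · have h4 : dist x y ≤ dist x e + dist e y := dist_triangle x e y
    rw [dist_comm e y] at h4
    have h5 : (0:ℝ) ≤ dist y e := dist_nonneg
    have h6 : (0:ℝ) ≤ dist x e := dist_nonneg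
    nlinarith

lemma cluster_S1 {ε : ℝ} (hε : 0 < ε) (hε2 : ε ≤ 1 / 2) {c e : M} (hne : c ≠ e)
    {x y : M} (hx : x ∉ clusterSet ε c e) (hy : y ∉ clusterSet ε c e) :
    (1 - ε) * (dist x y + 2 * dist c e) ≤ dist x c + dist y c := by
  have ht : 0 < dist c e := dist_pos.2 hne
  have htri : dist x y ≤ dist x c + dist y c := by
    have := dist_triangle x c y
    rw [dist_comm c y] at this; linarith
  have h6 : (0:ℝ) ≤ dist x c := dist_nonneg
  have h7 : (0:ℝ) ≤ dist y c := dist_nonneg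
  rcases cluster_H hε hε2 hne hx with hFx | hBx
  · nlinarith
  rcases cluster_H hε hε2 hne hy with hFy | hBy
  · nlinarith
  · have h4 : dist x y ≤ dist x e + dist y e := by
      have := dist_triangle x e y
      rw [dist_comm e y] at this; linarith
    have h8 : (0:ℝ) ≤ dist x y := dist_nonneg
    nlinarith

lemma cluster_cond2 {ε : ℝ} (hε : 0 < ε) (hε2 : ε ≤ 1 / 2) {c e : M} (hne : c ≠ e)
    {x y z w : M} (hx : x ∉ clusterSet ε c e) (hy : y ∉ clusterSet ε c e)
    (hz : z ∉ clusterSet ε c e) (hw : w ∉ clusterSet ε c e) :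
    (1 - ε) * (dist x y + dist z w + 2 * dist c e) ≤
      dist x c + dist y c + dist z e + dist w e := by
  have h1 := cluster_S1 hε hε2 hne hx hy
  have h2 : (1 - ε) * dist z w ≤ dist z e + dist w e := by
    have htri : dist z w ≤ dist z e + dist w e := by
      have := dist_triangle z e w
      rw [dist_comm e w] at this; linarith
    nlinarith [dist_nonneg (x := z) (y := w)]
  linarith [h1, h2]

lemma seq_rec {St : Type*} (init : St) {R : St → St → Prop} (h : ∀ s, ∃ t, R s t) :
    ∃ f : ℕ → St, f 0 = init ∧ ∀ n, R (f n) (f (n + 1)) := by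
  refine ⟨fun n => Nat.rec init (fun _ s => Classical.choose (h s)) n, rfl, fun n => ?_⟩
  exact Classical.choose_spec (h _)

lemma ball_subset_cluster_ball {ε : ℝ} (hε : 0 < ε) (hε2 : ε ≤ 1 / 2) (c e : M) :
    Metric.ball e (ε * dist c e / 2) ⊆ Metric.closedBall c (2 / ε * dist c e) := by
  intro x hx
  simp only [Metric.mem_ball] at hx
  simp only [Metric.mem_closedBall]
  have htr : dist x c ≤ dist x e + dist e c := dist_triangle x e c
  rw [dist_comm e c] at htr
  have ht : (0:ℝ) ≤ dist c e := dist_nonneg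
  rw [div_mul_eq_mul_div, le_div_iff₀ hε]
  nlinarith [mul_le_mul_of_nonneg_right htr hε.le, mul_lt_mul_of_pos_right hx hε,
    mul_nonneg ht hε.le, mul_le_mul hε2 hε2 hε.le (by norm_num : (0:ℝ) ≤ 1/2)]

lemma telescope_disjoint {ε : ℝ} (hε : 0 < ε) (hε2 : ε ≤ 1 / 2) (c e : ℕ → M)
    (hα : ∀ m, Metric.closedBall (c (m + 1)) (2 / ε * dist (c (m + 1)) (e (m + 1))) ⊆
      Metric.ball (e m) (ε * dist (c m) (e m) / 2))
    (hβ : ∀ m, e m ∉ Metric.closedBall (c (m + 1)) (2 / ε * dist (c (m + 1)) (e (m + 1)))) :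
    Pairwise fun m k => Disjoint (clusterSet ε (c m) (e m)) (clusterSet ε (c k) (e k)) := by
  have hchain : ∀ m n, m < n →
      Metric.closedBall (c n) (2 / ε * dist (c n) (e n)) ⊆
        Metric.ball (e m) (ε * dist (c m) (e m) / 2) ∧
      e m ∉ Metric.closedBall (c n) (2 / ε * dist (c n) (e n)) := by
    intro m n h
    induction n, h using Nat.le_induction with
    | base => exact ⟨hα m, hβ m⟩
    | succ n hmn ih =>
      have hsub : Metric.closedBall (c (n + 1)) (2 / ε * dist (c (n + 1)) (e (n + 1))) ⊆
          Metric.closedBall (c n) (2 / ε * dist (c n) (e n)) :=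
        (hα n).trans (ball_subset_cluster_ball hε hε2 _ _)
      exact ⟨hsub.trans ih.1, fun hmem => ih.2 (hsub hmem)⟩
  have key : ∀ m n, m < n →
      Disjoint (clusterSet ε (c m) (e m)) (clusterSet ε (c n) (e n)) := by
    intro m n h
    rw [Set.disjoint_left]
    intro x hxm hxn
    have hxball : x ∈ Metric.closedBall (c n) (2 / ε * dist (c n) (e n)) :=
      clusterSet_subset hε hε2 _ _ hxn
    rcases hxm with ⟨-, hnotball⟩ | rfl
    · exact hnotball ((hchain m n h).1 hxball)
    · exact (hchain m n h).2 hxball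
  intro m n hmn
  rcases hmn.lt_or_gt with h | h
  · exact key m n h
  · exact (key n m h).symm

lemma far_disjoint {ε : ℝ} (hε : 0 < ε) (hε2 : ε ≤ 1 / 2) (c e : ℕ → M)
    (sep : ∀ m k, m ≠ k →
      2 / ε * dist (c m) (e m) + 2 / ε * dist (c k) (e k) < dist (c m) (c k)) :
    Pairwise fun m k => Disjoint (clusterSet ε (c m) (e m)) (clusterSet ε (c k) (e k)) := by
  intro m k hmk
  rw [Set.disjoint_left]
  intro x hxm hxk
  have h1 := clusterSet_subset hε hε2 _ _ hxm
  have h2 := clusterSet_subset hε hε2 _ _ hxk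
  simp only [Metric.mem_closedBall] at h1 h2
  have := sep m k hmk
  have htr : dist (c m) (c k) ≤ dist x (c m) + dist x (c k) := by
    rw [dist_comm x (c m)] at *
    exact dist_triangle _ _ _
  linarith

lemma exists_cluster_pairs {ε : ℝ} (hε : 0 < ε) (hε2 : ε ≤ 1 / 2)
    (hpair : ∀ δ : ℝ, 0 < δ → ∃ u v : M, u ≠ v ∧ dist u v < δ)
    (ρ : M → ℝ) (ρpos : ∀ p, 0 < ρ p) (ρspec : ∀ p x, x ≠ p → ρ p ≤ dist x p) :
    ∃ c e : ℕ → M, (∀ m, c m ≠ e m) ∧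
      Pairwise fun m k => Disjoint (clusterSet ε (c m) (e m)) (clusterSet ε (c k) (e k)) := by
  classical
  -- Step 1 : a sequence of pairs with rapidly decreasing distances and distinct points
  obtain ⟨u0, v0, hne0, hd0⟩ := hpair 1 one_pos
  have hstep1 : ∀ s : ℕ × Finset M × M × M, ∃ s' : ℕ × Finset M × M × M,
      s'.1 = s.1 + 1 ∧ s'.2.1 = insert s.2.2.1 (insert s.2.2.2 s.2.1) ∧
      s'.2.2.1 ≠ s'.2.2.2 ∧ s'.2.2.1 ∉ s'.2.1 ∧ s'.2.2.2 ∉ s'.2.1 ∧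
      dist s'.2.2.1 s'.2.2.2 < (1/2 : ℝ)^(s.1+1) := by
    rintro ⟨n, U, p, q⟩
    set U' : Finset M := insert p (insert q U) with hU'
    have hU'ne : U'.Nonempty := ⟨p, Finset.mem_insert_self _ _⟩
    set β : ℝ := min ((1/2 : ℝ)^(n+1)) (U'.inf' hU'ne ρ) with hβdef
    have hβ : 0 < β := lt_min (by positivity) (by
      rw [Finset.lt_inf'_iff]; exact fun w _ => ρpos w)
    obtain ⟨u, v, huv, hd⟩ := hpair β hβ
    have hu : u ∉ U' := by
      intro hu
      have h1 : ρ u ≤ dist v u := ρspec u v (Ne.symm huv)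
      have h2 : β ≤ ρ u := le_trans (min_le_right _ _) (Finset.inf'_le ρ hu)
      rw [dist_comm] at h1
      linarith
    have hv : v ∉ U' := by
      intro hv
      have h1 : ρ v ≤ dist u v := ρspec v u huv
      have h2 : β ≤ ρ v := le_trans (min_le_right _ _) (Finset.inf'_le ρ hv)
      linarith
    exact ⟨(n+1, U', u, v), rfl, rfl, huv, hu, hv, lt_of_lt_of_le hd (min_le_left _ _)⟩
  obtain ⟨f, hf0, hfs⟩ := seq_rec ((0 : ℕ), (∅ : Finset M), u0, v0) hstep1
  set a : ℕ → M := fun n => (f n).2.2.1 with ha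
  set b : ℕ → M := fun n => (f n).2.2.2 with hb
  set U : ℕ → Finset M := fun n => (f n).2.1 with hU
  have hctr : ∀ n, (f n).1 = n := by
    intro n; induction n with
    | zero => rw [hf0]
    | succ n ih => rw [(hfs n).1, ih]
  have habne : ∀ n, a n ≠ b n := by
    intro n; cases n with
    | zero => simpa [a, b, hf0] using hne0
    | succ n => exact (hfs n).2.2.1
  have hdista : ∀ n, dist (a n) (b n) < (1/2 : ℝ)^n := by
    intro n; cases n with
    | zero => simpa [a, b, hf0] using hd0
    | succ n => have := (hfs n).2.2.2.2.2; rwa [hctr n] at this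
  have hUsucc : ∀ n, U (n+1) = insert (a n) (insert (b n) (U n)) := fun n => (hfs n).2.1
  have hamem : ∀ m n, m < n → a m ∈ U n := by
    intro m n h
    induction n, h using Nat.le_induction with
    | base => rw [hUsucc m]; exact Finset.mem_insert_self _ _
    | succ n hmn ih => rw [hUsucc n]; exact Finset.mem_insert_of_mem (Finset.mem_insert_of_mem ih)
  have hainj : ∀ m n, m < n → a m ≠ a n := by
    intro m n h heq
    obtain ⟨k, rfl⟩ : ∃ k, n = k + 1 := ⟨n - 1, by omega⟩
    have h1 : a (k+1) ∉ U (k+1) := (hfs k).2.2.2.1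
    rw [← heq] at h1
    exact h1 (hamem m (k+1) h)
  -- Step 2 : nested index sets
  set Cl : Set ℕ → ℝ → Prop :=
    fun T δ => ∃ m ∈ T, {n | n ∈ T ∧ dist (a n) (a m) < δ}.Infinite with hCldef
  have hstep2 : ∀ s : ℕ × {T : Set ℕ // T.Infinite}, ∃ s' : ℕ × {T : Set ℕ // T.Infinite},
      s'.1 = s.1 + 1 ∧ s'.2.val ⊆ s.2.val ∧
      (Cl s.2.val ((1/2)^(s.1+2)) →
        ∀ i ∈ s'.2.val, ∀ j ∈ s'.2.val, dist (a i) (a j) ≤ (1/2 : ℝ)^(s.1+1)) := by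
    rintro ⟨k, T, hT⟩
    by_cases h : Cl T ((1/2)^(k+2))
    · obtain ⟨m, hm, hinf⟩ := h
      refine ⟨(k+1, ⟨{n | n ∈ T ∧ dist (a n) (a m) < (1/2)^(k+2)}, hinf⟩), rfl,
        fun n hn => hn.1, fun _ i hi j hj => ?_⟩
      have htri : dist (a i) (a j) ≤ dist (a i) (a m) + dist (a j) (a m) := by
        have := dist_triangle (a i) (a m) (a j)
        rw [dist_comm (a m) (a j)] at this; linarith
      have hpow : (1/2 : ℝ)^(k+1) = 2 * (1/2 : ℝ)^(k+2) := by ring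
      have h1 := hi.2
      have h2 := hj.2
      rw [hpow]; linarith
    · exact ⟨(k+1, ⟨T, hT⟩), rfl, subset_rfl, fun hc => absurd hc h⟩
  obtain ⟨g, hg0, hgs⟩ := seq_rec ((0 : ℕ), (⟨Set.univ, Set.infinite_univ⟩ : {T : Set ℕ // T.Infinite})) hstep2
  set T : ℕ → Set ℕ := fun k => (g k).2.val with hT
  have hTinf : ∀ k, (T k).Infinite := fun k => (g k).2.2
  have hgctr : ∀ k, (g k).1 = k := by
    intro k; induction k with
    | zero => rw [hg0]
    | succ k ih => rw [(hgs k).1, ih]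
  have hTsub : ∀ k, T (k+1) ⊆ T k := fun k => (hgs k).2.1
  have hTmono : ∀ m k, m ≤ k → T k ⊆ T m := by
    intro m k h
    induction k, h using Nat.le_induction with
    | base => exact subset_rfl
    | succ k hmk ih => exact (hTsub k).trans ih
  by_cases hCl : ∀ k, Cl (T k) ((1/2)^(k+2))
  · -- "Cauchy" case: telescoping clusters
    have hdiam : ∀ k, ∀ i ∈ T (k+1), ∀ j ∈ T (k+1), dist (a i) (a j) ≤ (1/2 : ℝ)^(k+1) := by
      intro k
      have h := (hgs k).2.2
      rw [hgctr k] at h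
      exact h (hCl k)
    have hstep3 : ∀ s : {s : ℕ × ℕ // s.2 ∈ T (s.1+1)}, ∃ s' : {s : ℕ × ℕ // s.2 ∈ T (s.1+1)},
        s'.val.1 = s.val.1 + 1 ∧ s.val.2 < s'.val.2 := by
      rintro ⟨⟨k, n⟩, hn⟩
      obtain ⟨n', hn', hgt⟩ := (hTinf (k+2)).exists_gt n
      exact ⟨⟨(k+1, n'), hn'⟩, rfl, hgt⟩
    obtain ⟨n0, hn0⟩ := (hTinf 1).nonempty
    obtain ⟨d, hd0', hds⟩ := seq_rec (⟨(0, n0), hn0⟩ : {s : ℕ × ℕ // s.2 ∈ T (s.1+1)}) hstep3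
    set φ : ℕ → ℕ := fun k => (d k).val.2 with hφ
    have hdctr : ∀ k, (d k).val.1 = k := by
      intro k; induction k with
      | zero => rw [hd0']
      | succ k ih => rw [(hds k).1, ih]
    have hφmono : StrictMono φ := strictMono_nat_of_lt_succ fun n => (hds n).2
    have hφT : ∀ k, φ k ∈ T (k+1) := by
      intro k; have := (d k).2; rwa [hdctr k] at this
    set y : ℕ → M := fun k => a (φ k) with hy
    have hyrate : ∀ i j, i < j → dist (y i) (y j) ≤ (1/2 : ℝ)^i := by
      intro i j hij
      have h1 : φ j ∈ T (i+1) := hTmono (i+1) (j+1) (by omega) (hφT j)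
      have h2 := hdiam i (φ i) (hφT i) (φ j) h1
      have h3 : (1/2:ℝ)^(i+1) ≤ (1/2:ℝ)^i := by
        rw [pow_succ]
        nlinarith [pow_pos (by norm_num : (0:ℝ) < 1/2) i]
      exact h2.trans h3
    have hyinj : ∀ i j, i ≠ j → y i ≠ y j := by
      intro i j hij
      rcases hij.lt_or_gt with h | h
      · exact hainj _ _ (hφmono h)
      · exact (hainj _ _ (hφmono h)).symm
    -- telescoping choice of indices
    have hstep4 : ∀ s : {s : ℕ × ℕ // s.1 < s.2 ∧ (1/2:ℝ)^s.2 ≤ ε * ρ (y s.1) / 8},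
        ∃ s' : {s : ℕ × ℕ // s.1 < s.2 ∧ (1/2:ℝ)^s.2 ≤ ε * ρ (y s.1) / 8},
        s.val.2 < s'.val.1 ∧
        (1/2:ℝ)^s'.val.1 ≤ ρ (y s.val.2) / (2 * (2/ε)) ∧
        (1/2:ℝ)^s'.val.1 ≤ (1/2:ℝ)^s.val.2 / (2/ε) := by
      rintro ⟨⟨p, q⟩, hpq, hq⟩
      have hρq := ρpos (y q)
      have hKpos : (0:ℝ) < 2/ε := by positivity
      have hpowq : (0:ℝ) < (1/2:ℝ)^q := by positivity
      have hb1 : (0:ℝ) < min (ρ (y q) / (2 * (2/ε))) ((1/2:ℝ)^q / (2/ε)) :=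
        lt_min (by positivity) (by positivity)
      obtain ⟨n1, hn1⟩ := exists_pow_lt_of_lt_one hb1 (by norm_num : (1/2:ℝ) < 1)
      have hp'gt : q < max (q+1) n1 := lt_of_lt_of_le (Nat.lt_succ_self q) (le_max_left _ _)
      have hp'le : (1/2:ℝ)^(max (q+1) n1) ≤
          min (ρ (y q) / (2 * (2/ε))) ((1/2:ℝ)^q / (2/ε)) := by
        refine le_trans ?_ hn1.le
        exact pow_le_pow_of_le_one (by norm_num) (by norm_num) (le_max_right _ _)
      have hρp' := ρpos (y (max (q+1) n1))
      have hb2 : (0:ℝ) < ε * ρ (y (max (q+1) n1)) / 8 := by positivity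
      obtain ⟨n2, hn2⟩ := exists_pow_lt_of_lt_one hb2 (by norm_num : (1/2:ℝ) < 1)
      have hq'gt : max (q+1) n1 < max (max (q+1) n1 + 1) n2 :=
        lt_of_lt_of_le (Nat.lt_succ_self _) (le_max_left _ _)
      have hq'le : (1/2:ℝ)^(max (max (q+1) n1 + 1) n2) ≤ ε * ρ (y (max (q+1) n1)) / 8 := by
        refine le_trans ?_ hn2.le
        exact pow_le_pow_of_le_one (by norm_num) (by norm_num) (le_max_right _ _)
      exact ⟨⟨(max (q+1) n1, max (max (q+1) n1 + 1) n2), hq'gt, hq'le⟩, hp'gt,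
        le_trans hp'le (min_le_left _ _), le_trans hp'le (min_le_right _ _)⟩
    have hρ0 := ρpos (y 0)
    have hb0 : (0:ℝ) < ε * ρ (y 0) / 8 := by positivity
    obtain ⟨n3, hn3⟩ := exists_pow_lt_of_lt_one hb0 (by norm_num : (1/2:ℝ) < 1)
    have hq0le : (1/2:ℝ)^(max 1 n3) ≤ ε * ρ (y 0) / 8 := by
      refine le_trans ?_ hn3.le
      exact pow_le_pow_of_le_one (by norm_num) (by norm_num) (le_max_right _ _)
    obtain ⟨F, hF0, hFs⟩ := seq_rec
      (⟨(0, max 1 n3), lt_of_lt_of_le Nat.one_pos (le_max_left _ _), hq0le⟩ :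
        {s : ℕ × ℕ // s.1 < s.2 ∧ (1/2:ℝ)^s.2 ≤ ε * ρ (y s.1) / 8}) hstep4
    set P : ℕ → ℕ := fun m => (F m).val.1 with hPdef
    set Q : ℕ → ℕ := fun m => (F m).val.2 with hQdef
    have hPQ : ∀ m, P m < Q m := fun m => (F m).2.1
    have hQbd : ∀ m, (1/2:ℝ)^(Q m) ≤ ε * ρ (y (P m)) / 8 := fun m => (F m).2.2
    have hQP : ∀ m, Q m < P (m+1) := fun m => (hFs m).1
    have hPr1 : ∀ m, (1/2:ℝ)^(P (m+1)) ≤ ρ (y (Q m)) / (2 * (2/ε)) := fun m => (hFs m).2.1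
    have hPr2 : ∀ m, (1/2:ℝ)^(P (m+1)) ≤ (1/2:ℝ)^(Q m) / (2/ε) := fun m => (hFs m).2.2
    have hnecm : ∀ m, y (P m) ≠ y (Q m) := fun m => hyinj _ _ (hPQ m).ne
    have hρt : ∀ m, ρ (y (P m)) ≤ dist (y (P m)) (y (Q m)) := by
      intro m
      have h := ρspec (y (P m)) (y (Q m)) (hyinj _ _ (hPQ m).ne')
      rwa [dist_comm] at h
    have htle : ∀ m, dist (y (P m)) (y (Q m)) ≤ (1/2:ℝ)^(P m) := fun m => hyrate _ _ (hPQ m)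
    have hKpos : (0:ℝ) < 2/ε := by positivity
    have hα : ∀ m, Metric.closedBall (y (P (m+1))) (2/ε * dist (y (P (m+1))) (y (Q (m+1)))) ⊆
        Metric.ball (y (Q m)) (ε * dist (y (P m)) (y (Q m)) / 2) := by
      intro m x hx
      simp only [Metric.mem_closedBall] at hx
      simp only [Metric.mem_ball]
      have h1 : dist x (y (Q m)) ≤ dist x (y (P (m+1))) + dist (y (P (m+1))) (y (Q m)) :=
        dist_triangle _ _ _
      have h2 : dist (y (P (m+1))) (y (Q m)) ≤ (1/2:ℝ)^(Q m) := by
        have h := hyrate (Q m) (P (m+1)) (hQP m)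
        rwa [dist_comm] at h
      have h3 : (2/ε) * dist (y (P (m+1))) (y (Q (m+1))) ≤ (1/2:ℝ)^(Q m) := by
        calc (2/ε) * dist (y (P (m+1))) (y (Q (m+1))) ≤ (2/ε) * (1/2:ℝ)^(P (m+1)) :=
            mul_le_mul_of_nonneg_left (htle (m+1)) hKpos.le
          _ ≤ (2/ε) * ((1/2:ℝ)^(Q m) / (2/ε)) := mul_le_mul_of_nonneg_left (hPr2 m) hKpos.le
          _ = (1/2:ℝ)^(Q m) := by field_simp
      have h6 := hQbd m
      have h7 := hρt m
      have h8 : 0 < dist (y (P m)) (y (Q m)) := dist_pos.2 (hnecm m)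
      nlinarith [mul_pos hε h8]
    have hβ : ∀ m, y (Q m) ∉
        Metric.closedBall (y (P (m+1))) (2/ε * dist (y (P (m+1))) (y (Q (m+1)))) := by
      intro m hmem
      simp only [Metric.mem_closedBall] at hmem
      have h2 : ρ (y (Q m)) ≤ dist (y (Q m)) (y (P (m+1))) := by
        have h := ρspec (y (Q m)) (y (P (m+1))) (hyinj _ _ (hQP m).ne')
        rwa [dist_comm] at h
      have h3 : (2/ε) * dist (y (P (m+1))) (y (Q (m+1))) ≤ ρ (y (Q m)) / 2 := by
        calc (2/ε) * dist (y (P (m+1))) (y (Q (m+1))) ≤ (2/ε) * (1/2:ℝ)^(P (m+1)) :=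
            mul_le_mul_of_nonneg_left (htle (m+1)) hKpos.le
          _ ≤ (2/ε) * (ρ (y (Q m)) / (2 * (2/ε))) := mul_le_mul_of_nonneg_left (hPr1 m) hKpos.le
          _ = ρ (y (Q m)) / 2 := by field_simp
      have h6 := ρpos (y (Q m))
      linarith
    exact ⟨fun m => y (P m), fun m => y (Q m), hnecm,
      telescope_disjoint hε hε2 (fun m => y (P m)) (fun m => y (Q m)) hα hβ⟩
  · -- separated case
    push_neg at hCl
    obtain ⟨k, hk⟩ := hCl
    have hfin : ∀ m ∈ T k, {n | n ∈ T k ∧ dist (a n) (a m) < (1/2:ℝ)^(k+2)}.Finite := by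
      intro m hm
      rw [← Set.not_infinite]
      intro hinf
      exact hk ⟨m, hm, hinf⟩
    have hε₀ : (0:ℝ) < (1/2:ℝ)^(k+2) := by positivity
    -- greedy separated sequence in T k
    have hstep5 : ∀ s : {s : ℕ × Finset ℕ // ↑s.2 ⊆ T k ∧ s.1 ∈ s.2},
        ∃ s' : {s : ℕ × Finset ℕ // ↑s.2 ⊆ T k ∧ s.1 ∈ s.2},
        s.val.1 < s'.val.1 ∧ s.val.2 ⊆ s'.val.2 ∧
        ∀ i ∈ s.val.2, (1/2:ℝ)^(k+2) ≤ dist (a s'.val.1) (a i) := by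
      rintro ⟨⟨l, C⟩, hCsub, hlC⟩
      have hbad : {n | n ∈ T k ∧ ∃ i ∈ C, dist (a n) (a i) < (1/2:ℝ)^(k+2)}.Finite := by
        have hsub : {n | n ∈ T k ∧ ∃ i ∈ C, dist (a n) (a i) < (1/2:ℝ)^(k+2)} ⊆
            ⋃ i ∈ (C : Set ℕ), {n | n ∈ T k ∧ dist (a n) (a i) < (1/2:ℝ)^(k+2)} := by
          rintro n ⟨hn, i, hi, hdi⟩
          exact Set.mem_biUnion hi ⟨hn, hdi⟩
        exact Set.Finite.subset
          (Set.Finite.biUnion C.finite_toSet fun i hi => hfin i (hCsub hi)) hsub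
      have hgood : (T k \ {n | n ∈ T k ∧ ∃ i ∈ C, dist (a n) (a i) < (1/2:ℝ)^(k+2)}).Infinite :=
        (hTinf k).diff hbad
      obtain ⟨n', hn', hgt⟩ := hgood.exists_gt l
      refine ⟨⟨(n', insert n' C), ?_, Finset.mem_insert_self _ _⟩, hgt,
        Finset.subset_insert _ _, ?_⟩
      · intro i hi
        rcases Finset.mem_insert.1 hi with rfl | hi
        · exact hn'.1
        · exact hCsub hi
      · intro i hi
        by_contra hlt
        push_neg at hlt
        exact hn'.2 ⟨hn'.1, i, hi, hlt⟩
    obtain ⟨n0, hn0⟩ := (hTinf k).nonempty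
    obtain ⟨G, hG0, hGs⟩ := seq_rec
      (⟨(n0, {n0}), by simpa using hn0, Finset.mem_singleton_self n0⟩ :
        {s : ℕ × Finset ℕ // ↑s.2 ⊆ T k ∧ s.1 ∈ s.2}) hstep5
    set ψ : ℕ → ℕ := fun m => (G m).val.1 with hψdef
    set C : ℕ → Finset ℕ := fun m => (G m).val.2 with hCdef
    have hψmono : StrictMono ψ := strictMono_nat_of_lt_succ fun n => (hGs n).1
    have hψC : ∀ m, ψ m ∈ C m := fun m => (G m).2.2
    have hCmono : ∀ m n, m ≤ n → C m ⊆ C n := by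
      intro m n h
      induction n, h using Nat.le_induction with
      | base => exact subset_rfl
      | succ n hmn ih => exact ih.trans (hGs n).2.1
    have hsep : ∀ i j, i < j → (1/2:ℝ)^(k+2) ≤ dist (a (ψ j)) (a (ψ i)) := by
      intro i j hij
      obtain ⟨n, rfl⟩ : ∃ n, j = n + 1 := ⟨j - 1, by omega⟩
      exact (hGs n).2.2 (ψ i) (hCmono i n (by omega) (hψC i))
    -- choose a tail where the balls are small
    have hKpos : (0:ℝ) < 2/ε := by positivity
    have hbN : (0:ℝ) < ((1/2:ℝ)^(k+2) / 2) / (2/ε) := by positivity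
    obtain ⟨N, hN⟩ := exists_pow_lt_of_lt_one hbN (by norm_num : (1/2:ℝ) < 1)
    have hrad : ∀ i : ℕ, 2/ε * dist (a (ψ (i + N))) (b (ψ (i + N))) < (1/2:ℝ)^(k+2) / 2 := by
      intro i
      have h1 : dist (a (ψ (i + N))) (b (ψ (i + N))) < (1/2:ℝ)^(ψ (i + N)) := hdista _
      have h2 : (1/2:ℝ)^(ψ (i + N)) ≤ (1/2:ℝ)^N := by
        apply pow_le_pow_of_le_one (by norm_num) (by norm_num)
        calc N ≤ i + N := Nat.le_add_left _ _
          _ ≤ ψ (i + N) := hψmono.le_apply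
      have h3 : (1/2:ℝ)^N < ((1/2:ℝ)^(k+2) / 2) / (2/ε) := hN
      have h4 : dist (a (ψ (i + N))) (b (ψ (i + N))) < ((1/2:ℝ)^(k+2) / 2) / (2/ε) :=
        lt_of_lt_of_le (lt_of_lt_of_le h1 h2) h3.le
      calc 2/ε * dist (a (ψ (i + N))) (b (ψ (i + N)))
          < 2/ε * (((1/2:ℝ)^(k+2) / 2) / (2/ε)) := by
            apply mul_lt_mul_of_pos_left _ hKpos
            exact lt_of_le_of_lt (le_of_lt (lt_of_lt_of_le h1 h2)) h3
        _ = (1/2:ℝ)^(k+2) / 2 := by field_simp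
    refine ⟨fun i => a (ψ (i + N)), fun i => b (ψ (i + N)), fun i => habne _, ?_⟩
    apply far_disjoint hε hε2
    intro m n hmn
    have hd1 := hrad m
    have hd2 := hrad n
    have hsep' : (1/2:ℝ)^(k+2) ≤ dist (a (ψ (m + N))) (a (ψ (n + N))) := by
      rcases hmn.lt_or_gt with h | h
      · have := hsep (m + N) (n + N) (by omega)
        rwa [dist_comm] at this
      · exact hsep (n + N) (m + N) (by omega)
    linarith

end Auxiliary

/-- Every metric space which is not uniformly discrete and has no limit points has the
seq-SLTP. -/
theorem not_uniformlyDiscrete_no_limitPoint_seqSLTP (M : Type*) [MetricSpace M]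
    (h1 : ¬ ∃ ε : ℝ, 0 < ε ∧ ∀ x y : M, x ≠ y → ε ≤ dist x y)
    (h2 : ∀ p : M, ¬ ∀ r : ℝ, 0 < r → ∃ x : M, x ≠ p ∧ dist x p < r) :
    SeqSLTP M := by
  intro ε hε
  have hε' : 0 < min ε (1/2) := lt_min hε (by norm_num)
  have hε'2 : min ε (1/2) ≤ 1/2 := min_le_right _ _
  have hε'ε : min ε (1/2) ≤ ε := min_le_left _ _
  have hpair : ∀ δ : ℝ, 0 < δ → ∃ u v : M, u ≠ v ∧ dist u v < δ := by
    push_neg at h1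
    exact fun δ hδ => h1 δ hδ
  have hrho : ∀ p : M, ∃ r : ℝ, 0 < r ∧ ∀ x : M, x ≠ p → r ≤ dist x p := by
    intro p
    have h := h2 p
    push_neg at h
    exact h
  choose ρ ρpos ρspec using hrho
  obtain ⟨c, e, hne, hdisj⟩ := exists_cluster_pairs hε' hε'2 hpair ρ ρpos ρspec
  refine ⟨fun m => clusterSet (min ε (1/2)) (c m) (e m), hdisj, fun m => ⟨c m,
    left_mem_clusterSet hε' hε'2 (hne m), e m, right_mem_clusterSet (c m) (e m), hne m, ?_, ?_⟩⟩
  · intro x hx y hy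
    have h := cluster_cond1 hε' hε'2 (hne m) hx hy
    have hX : (0:ℝ) ≤ dist x y + dist (c m) (e m) := by positivity
    have h2' : (1 - ε) * (dist x y + dist (c m) (e m)) ≤
        (1 - min ε (1/2)) * (dist x y + dist (c m) (e m)) :=
      mul_le_mul_of_nonneg_right (by linarith) hX
    linarith
  · intro x hx y hy z hz w hw
    have h := cluster_cond2 hε' hε'2 (hne m) hx hy hz hw
    have hX : (0:ℝ) ≤ dist x y + dist z w + 2 * dist (c m) (e m) := by positivity
    have h2' : (1 - ε) * (dist x y + dist z w + 2 * dist (c m) (e m)) ≤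
        (1 - min ε (1/2)) * (dist x y + dist z w + 2 * dist (c m) (e m)) :=
      mul_le_mul_of_nonneg_right (by linarith) hX
    linarith
end

section
/- For every natural number n ≥ 1, the metric space K_n has the sequential strong long trapezoid property (seq-SLTP). -/
/-- The metric space `Kn n`: all sequences with terms in `{0, 1, …, n}`, viewed as a metric
subspace of `ℓ∞` (bounded functions `ℕ → ℝ` with the supremum metric). -/
def Kn (n : ℕ) : Type :=
  {x : BoundedContinuousFunction ℕ ℝ // ∀ j : ℕ, ∃ k : ℕ, k ≤ n ∧ x j = k}

noncomputable instance (n : ℕ) : MetricSpace (Kn n) := Subtype.metricSpace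

/-!
For the `m`-th block use the coordinates `2m` and `2m + 1`. The markers are `u = n` everywhere
except `u (2m) = 0`, and `v`, which agrees with `u` except `v (2m + 1) = n - 1`; so `d(u, v) = 1`.
The block `A m` consists of the points with a zero at `2m` or `2m + 1` and no zero elsewhere,
together with the points equal to `1` at `2m` and at least `2` elsewhere. A point `x` outside
`A m` either has `x (2m) = n` or a zero off `{2m, 2m + 1}`, and then lies at distance at least
`n ≥ d(x, y)` from both markers; or it is positive at `2m` and `2m + 1` and, avoiding the second
cluster, has `x (2m) ≥ 2` or `x c ≤ 1` for some `c ≠ 2m`. For two points of the latter kind a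
coordinatewise comparison with the markers gives `|x c - y c| + 1 ≤ d(x, w₁) + d(y, w₂)`. So
`d(x, y) + d(u, v) ≤ d(x, w₁) + d(y, w₂)` holds exactly for all markers `w₁, w₂`, which gives
the property for every `ε`.
-/

open Set

theorem seqSLTP_of_forall_dist_add_le {M : Type*} [MetricSpace M] (A : ℕ → Set M)
    (hA : Pairwise fun m k => Disjoint (A m) (A k)) (u v : ℕ → M)
    (hu : ∀ m, u m ∈ A m) (hv : ∀ m, v m ∈ A m) (huv : ∀ m, u m ≠ v m)
    (h : ∀ m, ∀ x ∉ A m, ∀ y ∉ A m, ∀ w₁ ∈ ({u m, v m} : Set M), ∀ w₂ ∈ ({u m, v m} : Set M),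
      dist x y + dist (u m) (v m) ≤ dist x w₁ + dist y w₂) :
    SeqSLTP M := by
  intro ε hε
  have shrink : ∀ S T : ℝ, 0 ≤ S → S ≤ T → (1 - ε) * S ≤ T := fun S T hS hST => by
    nlinarith
  refine ⟨A, hA, fun m => ⟨u m, hu m, v m, hv m, huv m, fun x hx y hy => ?_,
    fun x hx y hy z hz w hw => ?_⟩⟩
  · exact shrink _ _ (by positivity) (h m x hx y hy _ (.inl rfl) _ (.inr rfl))
  · have hxy := h m x hx y hy _ (.inl rfl) _ (.inl rfl)
    have hzw := h m z hz w hw _ (.inr rfl) _ (.inr rfl)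
    exact shrink _ _ (by positivity) (by linarith)

namespace Kn

variable {n m : ℕ}

noncomputable def coord (x : Kn n) (j : ℕ) : ℕ := (x.2 j).choose

lemma coord_le (x : Kn n) (j : ℕ) : x.coord j ≤ n := (x.2 j).choose_spec.1

lemma apply_eq_coord (x : Kn n) (j : ℕ) : x.1 j = x.coord j := (x.2 j).choose_spec.2

lemma abs_coord_sub_coord_le_dist (x y : Kn n) (j : ℕ) :
    |(x.coord j : ℝ) - y.coord j| ≤ dist x y := by
  rw [← apply_eq_coord, ← apply_eq_coord, ← Real.dist_eq]
  exact BoundedContinuousFunction.dist_coe_le_dist j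

lemma coord_sub_coord_le_dist (x y : Kn n) (j : ℕ) :
    (x.coord j : ℝ) - y.coord j ≤ dist x y :=
  (le_abs_self _).trans (abs_coord_sub_coord_le_dist x y j)

lemma dist_le_of_forall_abs_coord_sub_le {x y : Kn n} {C : ℝ} (hC : 0 ≤ C)
    (h : ∀ j, |(x.coord j : ℝ) - y.coord j| ≤ C) : dist x y ≤ C :=
  (BoundedContinuousFunction.dist_le hC).2 fun j => by
    rw [Real.dist_eq, apply_eq_coord, apply_eq_coord]
    exact h j

lemma dist_le_natCast (x y : Kn n) : dist x y ≤ n :=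
  dist_le_of_forall_abs_coord_sub_le (Nat.cast_nonneg n) fun j => by
    have hx : (x.coord j : ℝ) ≤ n := by exact_mod_cast x.coord_le j
    have hy : (y.coord j : ℝ) ≤ n := by exact_mod_cast y.coord_le j
    rw [abs_sub_le_iff]
    constructor <;> linarith [(x.coord j).cast_nonneg (α := ℝ), (y.coord j).cast_nonneg (α := ℝ)]

noncomputable def ofNat (f : ℕ → ℕ) (hf : ∀ j, f j ≤ n) : Kn n :=
  ⟨BoundedContinuousFunction.mkOfDiscrete (fun j => (f j : ℝ)) n fun a b => by
      have ha : (f a : ℝ) ≤ n := by exact_mod_cast hf a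
      have hb : (f b : ℝ) ≤ n := by exact_mod_cast hf b
      rw [Real.dist_eq, abs_sub_le_iff]
      constructor <;> linarith [(f a).cast_nonneg (α := ℝ), (f b).cast_nonneg (α := ℝ)],
    fun j => ⟨f j, hf j, rfl⟩⟩

lemma coord_ofNat (f : ℕ → ℕ) (hf : ∀ j, f j ≤ n) (j : ℕ) : (ofNat f hf).coord j = f j :=
  Nat.cast_injective (R := ℝ) ((apply_eq_coord _ j).symm.trans rfl)

noncomputable def marker (n m t : ℕ) : Kn n :=
  ofNat (fun j => if j = 2 * m then 0 else if j = 2 * m + 1 then n - t else n) fun j => by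
    split_ifs <;> omega

def IsMarker (m : ℕ) (w : Kn n) : Prop :=
  w.coord (2 * m) = 0 ∧ n ≤ w.coord (2 * m + 1) + 1 ∧
    ∀ c, c ≠ 2 * m → c ≠ 2 * m + 1 → w.coord c = n

lemma isMarker_marker {t : ℕ} (ht : t ≤ 1) : IsMarker m (marker n m t) := by
  refine ⟨?_, ?_, fun c h₁ h₂ => ?_⟩ <;> simp only [marker, coord_ofNat] <;> split_ifs <;> omega

lemma marker_zero_ne_marker_one (hn : 1 ≤ n) : marker n m 0 ≠ marker n m 1 := fun h => by
  have := congrArg (coord · (2 * m + 1)) h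
  simp only [marker, coord_ofNat] at this
  split_ifs at this <;> omega

lemma dist_marker_zero_marker_one_le : dist (marker n m 0) (marker n m 1) ≤ 1 :=
  dist_le_of_forall_abs_coord_sub_le zero_le_one fun c => by
    have h₁ : (marker n m 0).coord c ≤ (marker n m 1).coord c + 1 := by
      simp only [marker, coord_ofNat]; split_ifs <;> omega
    have h₂ : (marker n m 1).coord c ≤ (marker n m 0).coord c := by
      simp only [marker, coord_ofNat]; split_ifs <;> omega
    have h₁' : ((marker n m 0).coord c : ℝ) ≤ (marker n m 1).coord c + 1 := by exact_mod_cast h₁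
    have h₂' : ((marker n m 1).coord c : ℝ) ≤ (marker n m 0).coord c := by exact_mod_cast h₂
    rw [abs_sub_le_iff]
    constructor <;> linarith

namespace IsMarker

variable {w : Kn n}

lemma coord_le_dist (hw : IsMarker m w) (x : Kn n) : (x.coord (2 * m) : ℝ) ≤ dist x w := by
  simpa [hw.1] using coord_sub_coord_le_dist x w (2 * m)

lemma natCast_sub_coord_le_dist (hw : IsMarker m w) (x : Kn n) {c : ℕ} (h₁ : c ≠ 2 * m)
    (h₂ : c ≠ 2 * m + 1) : (n : ℝ) - x.coord c ≤ dist x w := by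
  simpa [hw.2.2 c h₁ h₂, dist_comm] using coord_sub_coord_le_dist w x c

lemma natCast_sub_one_sub_coord_le_dist (hw : IsMarker m w) (x : Kn n) :
    (n : ℝ) - 1 - x.coord (2 * m + 1) ≤ dist x w := by
  have hq : (n : ℝ) ≤ w.coord (2 * m + 1) + 1 := by exact_mod_cast hw.2.1
  linarith [dist_comm x w ▸ coord_sub_coord_le_dist w x (2 * m + 1)]

end IsMarker

def block (n m : ℕ) : Set (Kn n) :=
  {x | (x.coord (2 * m) = 0 ∨ x.coord (2 * m + 1) = 0) ∧
      ∀ c, c ≠ 2 * m → c ≠ 2 * m + 1 → x.coord c ≠ 0} ∪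
    {x | x.coord (2 * m) = 1 ∧ ∀ c, c ≠ 2 * m → 2 ≤ x.coord c}

lemma IsMarker.mem_block (hn : 1 ≤ n) {w : Kn n} (hw : IsMarker m w) : w ∈ block n m :=
  .inl ⟨.inl hw.1, fun c h₁ h₂ => by rw [hw.2.2 c h₁ h₂]; omega⟩

lemma disjoint_block {k : ℕ} (hmk : m ≠ k) : Disjoint (block n m) (block n k) := by
  rw [Set.disjoint_left]
  rintro x (⟨hz, -⟩ | ⟨hp, hm⟩) (⟨hz', hk⟩ | ⟨hp', hk⟩)
  · have := hk (2 * m) (by omega) (by omega)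
    have := hk (2 * m + 1) (by omega) (by omega)
    omega
  · have := hk (2 * m) (by omega)
    have := hk (2 * m + 1) (by omega)
    omega
  · have := hm (2 * k) (by omega)
    have := hm (2 * k + 1) (by omega)
    omega
  · have := hk (2 * m) (by omega)
    omega

def Far (m : ℕ) (x : Kn n) : Prop :=
  x.coord (2 * m) = n ∨ ∃ c, c ≠ 2 * m ∧ c ≠ 2 * m + 1 ∧ x.coord c = 0

def Near (m : ℕ) (x : Kn n) : Prop :=
  1 ≤ x.coord (2 * m) ∧ 1 ≤ x.coord (2 * m + 1) ∧
    (2 ≤ x.coord (2 * m) ∨ ∃ c, c ≠ 2 * m ∧ x.coord c ≤ 1)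

lemma far_or_near_of_not_mem_block {x : Kn n} (hx : x ∉ block n m) : Far m x ∨ Near m x := by
  rw [or_iff_not_imp_left]
  intro hfar
  simp only [Far, not_or, not_exists, not_and] at hfar
  simp only [block, mem_union, mem_ofPred_eq, not_or, not_and, not_forall, not_le] at hx
  obtain ⟨hzero, hone⟩ := hx
  have hpq : x.coord (2 * m) ≠ 0 ∧ x.coord (2 * m + 1) ≠ 0 := by
    rw [← not_or]
    intro h
    obtain ⟨c, h₁, h₂, hc⟩ := hzero h
    exact hc (hfar.2 c h₁ h₂)
  refine ⟨by omega, by omega, ?_⟩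
  by_cases hp₁ : x.coord (2 * m) = 1
  · obtain ⟨c, hc, hlt⟩ := hone hp₁
    exact .inr ⟨c, hc, by omega⟩
  · exact .inl (by omega)

section

variable {x y w₁ w₂ : Kn n}

lemma natCast_le_dist_of_far (hw : IsMarker m w₁) (hx : Far m x) : (n : ℝ) ≤ dist x w₁ := by
  rcases hx with hp | ⟨c, h₁, h₂, h₀⟩
  · simpa [hp] using hw.coord_le_dist x
  · simpa [h₀] using hw.natCast_sub_coord_le_dist x h₁ h₂

lemma one_le_dist_of_far_or_near (hn : 1 ≤ n) (hw : IsMarker m w₁) (hx : Far m x ∨ Near m x) :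
    1 ≤ dist x w₁ := by
  rcases hx with hx | hx
  · exact le_trans (by exact_mod_cast hn) (natCast_le_dist_of_far hw hx)
  · exact le_trans (by exact_mod_cast hx.1) (hw.coord_le_dist x)

lemma coord_sub_coord_add_one_le_of_near (hw₁ : IsMarker m w₁) (hw₂ : IsMarker m w₂)
    (hx : Near m x) (hy : Near m y) (c : ℕ) :
    (x.coord c : ℝ) - y.coord c + 1 ≤ dist x w₁ + dist y w₂ := by
  have hxp : (1 : ℝ) ≤ x.coord (2 * m) := by exact_mod_cast hx.1
  have hyp : (1 : ℝ) ≤ y.coord (2 * m) := by exact_mod_cast hy.1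
  have hyq : (1 : ℝ) ≤ y.coord (2 * m + 1) := by exact_mod_cast hy.2.1
  have hxc : (x.coord c : ℝ) ≤ n := by exact_mod_cast x.coord_le c
  have hd₁ := hw₁.coord_le_dist x
  have hd₂ := hw₂.coord_le_dist y
  have := dist_nonneg (x := y) (y := w₂)
  by_cases hcp : c = 2 * m
  · subst hcp
    linarith
  by_cases hcq : c = 2 * m + 1
  · subst hcq
    rcases hx.2.2 with hp₂ | ⟨c', hc'p, hc'⟩
    · have : (2 : ℝ) ≤ x.coord (2 * m) := by exact_mod_cast hp₂
      linarith [hw₂.natCast_sub_one_sub_coord_le_dist y]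
    by_cases hc'q : c' = 2 * m + 1
    · subst hc'q
      have : (x.coord (2 * m + 1) : ℝ) ≤ 1 := by exact_mod_cast hc'
      linarith
    · have : (x.coord c' : ℝ) ≤ 1 := by exact_mod_cast hc'
      linarith [hw₁.natCast_sub_coord_le_dist x hc'p hc'q]
  · linarith [hw₂.natCast_sub_coord_le_dist y hcp hcq]

lemma dist_add_one_le_of_near (hw₁ : IsMarker m w₁) (hw₂ : IsMarker m w₂) (hx : Near m x)
    (hy : Near m y) : dist x y + 1 ≤ dist x w₁ + dist y w₂ := by
  have h₁ : (1 : ℝ) ≤ dist x w₁ := le_trans (by exact_mod_cast hx.1) (hw₁.coord_le_dist x)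
  suffices dist x y ≤ dist x w₁ + dist y w₂ - 1 by linarith
  refine dist_le_of_forall_abs_coord_sub_le (by linarith [dist_nonneg (x := y) (y := w₂)])
    fun c => abs_sub_le_iff.2 ⟨?_, ?_⟩
  · linarith [coord_sub_coord_add_one_le_of_near hw₁ hw₂ hx hy c]
  · linarith [coord_sub_coord_add_one_le_of_near hw₂ hw₁ hy hx c]

lemma dist_add_one_le (hn : 1 ≤ n) (hw₁ : IsMarker m w₁) (hw₂ : IsMarker m w₂)
    (hx : x ∉ block n m) (hy : y ∉ block n m) : dist x y + 1 ≤ dist x w₁ + dist y w₂ := by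
  have hy' := far_or_near_of_not_mem_block hy
  rcases far_or_near_of_not_mem_block hx with hxf | hxn
  · linarith [natCast_le_dist_of_far hw₁ hxf, one_le_dist_of_far_or_near hn hw₂ hy',
      dist_le_natCast x y]
  rcases hy' with hyf | hyn
  · linarith [natCast_le_dist_of_far hw₂ hyf, one_le_dist_of_far_or_near hn hw₁ (.inr hxn),
      dist_le_natCast x y]
  · exact dist_add_one_le_of_near hw₁ hw₂ hxn hyn

end

end Kn

open Kn in
/-- For every `n ≥ 1`, the metric space `Kn n` has the seq-SLTP. -/
theorem Kn_seqSLTP (n : ℕ) (hn : 1 ≤ n) : SeqSLTP (Kn n) := by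
  refine seqSLTP_of_forall_dist_add_le (block n) (fun m k => disjoint_block)
    (fun m => marker n m 0) (fun m => marker n m 1)
    (fun m => (isMarker_marker zero_le_one).mem_block hn)
    (fun m => (isMarker_marker le_rfl).mem_block hn)
    (fun m => marker_zero_ne_marker_one hn) fun m x hx y hy w₁ hw₁ w₂ hw₂ => ?_
  have isMarker_of_mem : ∀ w ∈ ({marker n m 0, marker n m 1} : Set (Kn n)), IsMarker m w := by
    rintro w (rfl | rfl)
    exacts [isMarker_marker zero_le_one, isMarker_marker le_rfl]
  calc dist x y + dist (marker n m 0) (marker n m 1) ≤ dist x y + 1 := by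
        gcongr; exact dist_marker_zero_marker_one_le
    _ ≤ dist x w₁ + dist y w₂ :=
        dist_add_one_le hn (isMarker_of_mem w₁ hw₁) (isMarker_of_mem w₂ hw₂) hx hy
end

section
/- Let M be a metric space, let ε > 0, let p ∈ M, let 0 ≤ s < r, and let u, v ∈ B(p,r) ∖ B(p,s) be such that 4s ≤ ε·d(u,v) and such that for every x ∈ M ∖ B(p,r) one has 2·d(u,v) ≤ ε·min{d(x,u), d(x,v)}. Set A = B(p,r) ∖ B(p,s). Then for all x, y ∈ M ∖ A one has (1−ε)(d(x,y) + d(u,v)) ≤ d(x,u) + d(y,v), and for all x, y, z, w ∈ M ∖ A one has (1−ε)(d(x,y) + d(z,w) + 2d(u,v)) ≤ d(x,u) + d(y,u) + d(z,v) + d(w,v). -/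
open Metric

/-- Let `ε > 0`, `p ∈ M`, `0 ≤ s < r`, and `u, v ∈ B(p,r) ∖ B(p,s)` be such that
`4s ≤ ε·d(u,v)` and `2·d(u,v) ≤ ε·min{d(x,u), d(x,v)}` for every `x ∉ B(p,r)`.
Then, with `A = B(p,r) ∖ B(p,s)`, the long trapezoid inequalities hold for all points
outside `A`. -/
theorem trapezoid_of_annulus (M : Type*) [MetricSpace M] (ε : ℝ) (hε : 0 < ε)
    (p u v : M) (r s : ℝ) (hs : 0 ≤ s) (hsr : s < r)
    (hu : u ∈ ball p r \ ball p s) (hv : v ∈ ball p r \ ball p s)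
    (h4s : 4 * s ≤ ε * dist u v)
    (hout : ∀ x : M, x ∉ ball p r → 2 * dist u v ≤ ε * min (dist x u) (dist x v)) :
    (∀ x ∉ ball p r \ ball p s, ∀ y ∉ ball p r \ ball p s,
      (1 - ε) * (dist x y + dist u v) ≤ dist x u + dist y v) ∧
    (∀ x ∉ ball p r \ ball p s, ∀ y ∉ ball p r \ ball p s,
      ∀ z ∉ ball p r \ ball p s, ∀ w ∉ ball p r \ ball p s,
        (1 - ε) * (dist x y + dist z w + 2 * dist u v) ≤
          dist x u + dist y u + dist z v + dist w v) := by
  have hus : s ≤ dist u p := le_of_not_gt (fun h => hu.2 (mem_ball.mpr h))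
  have hvs : s ≤ dist v p := le_of_not_gt (fun h => hv.2 (mem_ball.mpr h))
  have key : ∀ x, x ∉ ball p r \ ball p s →
      (dist x p < s) ∨ (2 * dist u v ≤ ε * dist x u ∧ 2 * dist u v ≤ ε * dist x v) := by
    intro x hx
    by_cases hxr : x ∈ ball p r
    · left
      by_contra h
      exact hx ⟨hxr, fun h' => h (mem_ball.mp h')⟩
    · right
      have := hout x hxr
      exact ⟨le_trans this (by nlinarith [min_le_left (dist x u) (dist x v)]),
             le_trans this (by nlinarith [min_le_right (dist x u) (dist x v)])⟩
  have duv : dist u v ≤ dist u p + dist v p := by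
    have := dist_triangle u p v
    rw [dist_comm p v] at this
    linarith
  constructor
  · intro x hx y hy
    rcases le_or_gt 1 ε with hε1 | hε1
    · have h1 : 1 - ε ≤ 0 := by linarith
      have h2 : 0 ≤ dist x y + dist u v := by positivity
      nlinarith [dist_nonneg (x := x) (y := u), dist_nonneg (x := y) (y := v)]
    · rcases key x hx with hxin | ⟨hxu, hxv⟩
      · rcases key y hy with hyin | ⟨hyu, hyv⟩
        · -- both inner
          have t1 : dist x y ≤ dist x p + dist y p := by
            have := dist_triangle x p y
            rw [dist_comm p y] at this
            linarith
          have t2 : dist u p - dist x p ≤ dist x u := by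
            have := dist_triangle u x p
            rw [dist_comm u x] at this
            linarith
          have t3 : dist v p - dist y p ≤ dist y v := by
            have := dist_triangle v y p
            rw [dist_comm v y] at this
            linarith
          nlinarith [dist_nonneg (x := u) (y := v), dist_nonneg (x := x) (y := p),
            dist_nonneg (x := y) (y := p)]
        · -- y outer
          have t1 : dist x y ≤ dist x u + dist u v + dist y v := by
            have := dist_triangle4 x u v y
            rw [dist_comm v y] at this
            linarith
          nlinarith [dist_nonneg (x := x) (y := u), dist_nonneg (x := y) (y := v),
            dist_nonneg (x := u) (y := v)]
      · -- x outer
        have t1 : dist x y ≤ dist x u + dist u v + dist y v := by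
          have := dist_triangle4 x u v y
          rw [dist_comm v y] at this
          linarith
        nlinarith [dist_nonneg (x := x) (y := u), dist_nonneg (x := y) (y := v),
          dist_nonneg (x := u) (y := v)]
  · intro x hx y hy z hz w hw
    rcases le_or_gt 1 ε with hε1 | hε1
    · have h1 : 1 - ε ≤ 0 := by linarith
      have h2 : 0 ≤ dist x y + dist z w + 2 * dist u v := by positivity
      nlinarith [dist_nonneg (x := x) (y := u), dist_nonneg (x := y) (y := u),
        dist_nonneg (x := z) (y := v), dist_nonneg (x := w) (y := v)]
    · have txy : dist x y ≤ dist x u + dist y u := by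
        have := dist_triangle x u y
        rw [dist_comm u y] at this
        linarith
      have tzw : dist z w ≤ dist z v + dist w v := by
        have := dist_triangle z v w
        rw [dist_comm v w] at this
        linarith
      rcases key x hx with hxin | ⟨hxu, hxv⟩
      · rcases key y hy with hyin | ⟨hyu, hyv⟩
        · rcases key z hz with hzin | ⟨hzu, hzv⟩
          · rcases key w hw with hwin | ⟨hwu, hwv⟩
            · -- all inner
              have t1 : dist x y ≤ dist x p + dist y p := by
                have := dist_triangle x p y; rw [dist_comm p y] at this; linarith
              have t2 : dist z w ≤ dist z p + dist w p := by
                have := dist_triangle z p w; rw [dist_comm p w] at this; linarith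
              have t3 : dist u p - dist x p ≤ dist x u := by
                have := dist_triangle u x p; rw [dist_comm u x] at this; linarith
              have t4 : dist u p - dist y p ≤ dist y u := by
                have := dist_triangle u y p; rw [dist_comm u y] at this; linarith
              have t5 : dist v p - dist z p ≤ dist z v := by
                have := dist_triangle v z p; rw [dist_comm v z] at this; linarith
              have t6 : dist v p - dist w p ≤ dist w v := by
                have := dist_triangle v w p; rw [dist_comm v w] at this; linarith
              nlinarith [dist_nonneg (x := u) (y := v), dist_nonneg (x := x) (y := p),
                dist_nonneg (x := y) (y := p), dist_nonneg (x := z) (y := p),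
                dist_nonneg (x := w) (y := p)]
            · nlinarith [dist_nonneg (x := x) (y := u), dist_nonneg (x := y) (y := u),
                dist_nonneg (x := z) (y := v), dist_nonneg (x := w) (y := v),
                dist_nonneg (x := u) (y := v)]
          · nlinarith [dist_nonneg (x := x) (y := u), dist_nonneg (x := y) (y := u),
              dist_nonneg (x := z) (y := v), dist_nonneg (x := w) (y := v),
              dist_nonneg (x := u) (y := v)]
        · nlinarith [dist_nonneg (x := x) (y := u), dist_nonneg (x := y) (y := u),
            dist_nonneg (x := z) (y := v), dist_nonneg (x := w) (y := v),
            dist_nonneg (x := u) (y := v)]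
      · nlinarith [dist_nonneg (x := x) (y := u), dist_nonneg (x := y) (y := u),
          dist_nonneg (x := z) (y := v), dist_nonneg (x := w) (y := v),
          dist_nonneg (x := u) (y := v)]
end

section
/- Let M be a metric space, let 0 < δ < 1, let A ⊆ M be a subset with M ∖ A nonempty, and let u, v ∈ A with u ≠ v be such that (1−δ)(d(x,y) + d(u,v)) ≤ d(x,u) + d(y,v) for all x, y ∈ M ∖ A, and (1−δ)(d(x,y) + d(z,w) + 2d(u,v)) ≤ d(x,u) + d(y,u) + d(z,v) + d(w,v) for all x, y, z, w ∈ M ∖ A. Then there exists a 1-Lipschitz function g : M → ℝ with g(x) = 0 for all x ∈ M ∖ A and |g(u) − g(v)| = (1−δ)·d(u,v), such that for every (1−δ)-Lipschitz function h : M → ℝ there exists a function f : M → ℝ with f(x) = h(x) for all x ∈ M ∖ A for which both f + g and f − g are 1-Lipschitz. -/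
lemma key1 (a b c : ℝ) :
    max a c - max b c + |(max a c - a) - (max b c - b)| ≤ |a - b| := by
  rcases le_total a c with h | h <;> rcases le_total b c with h' | h' <;>
    rcases abs_cases ((max a c - a) - (max b c - b)) with ⟨he, _⟩ | ⟨he, _⟩ <;>
    rcases abs_cases (a - b) with ⟨he', _⟩ | ⟨he', _⟩ <;>
    simp only [max_eq_right h, max_eq_left h, max_eq_right h', max_eq_left h'] at * <;>
    linarith

lemma key2 (a b c : ℝ) : (max a c - a) - (max b c - b) ≤ |a - b| := by
  rcases le_total a c with h | h <;> rcases le_total b c with h' | h' <;>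
    rcases abs_cases (a - b) with ⟨he', _⟩ | ⟨he', _⟩ <;>
    simp only [max_eq_right h, max_eq_left h, max_eq_right h', max_eq_left h'] at * <;>
    linarith



/-- A function `f : M → ℝ` is `L`-Lipschitz: `|f x - f y| ≤ L · d(x, y)` for all `x, y`. -/
def LipWith {M : Type*} [MetricSpace M] (L : ℝ) (f : M → ℝ) : Prop :=
  ∀ x y : M, |f x - f y| ≤ L * dist x y

/-- If `A ⊆ M` (with `M ∖ A` nonempty) and `u ≠ v` in `A` satisfy the `(1-δ)`-long trapezoid
inequalities for points outside `A`, then there is a `1`-Lipschitz `g` vanishing off `A` with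
`|g(u) - g(v)| = (1-δ)·d(u,v)` such that every `(1-δ)`-Lipschitz `h` admits an `f` agreeing
with `h` off `A` for which `f + g` and `f - g` are `1`-Lipschitz. -/
theorem trapezoid_symmetric_perturbation (M : Type*) [MetricSpace M]
    (δ : ℝ) (hδ0 : 0 < δ) (hδ1 : δ < 1)
    (A : Set M) (hA : ∃ x, x ∉ A)
    (u v : M) (hu : u ∈ A) (hv : v ∈ A) (huv : u ≠ v)
    (h1 : ∀ x ∉ A, ∀ y ∉ A,
      (1 - δ) * (dist x y + dist u v) ≤ dist x u + dist y v)
    (h2 : ∀ x ∉ A, ∀ y ∉ A, ∀ z ∉ A, ∀ w ∉ A,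
      (1 - δ) * (dist x y + dist z w + 2 * dist u v) ≤
        dist x u + dist y u + dist z v + dist w v) :
    ∃ g : M → ℝ, LipWith 1 g ∧ (∀ x ∉ A, g x = 0) ∧
      |g u - g v| = (1 - δ) * dist u v ∧
      ∀ h : M → ℝ, LipWith (1 - δ) h →
        ∃ f : M → ℝ, (∀ x ∉ A, f x = h x) ∧
          LipWith 1 (fun x => f x + g x) ∧ LipWith 1 (fun x => f x - g x) := by
  obtain ⟨x₀, hx₀⟩ := hA
  have hduv : 0 < dist u v := dist_pos.mpr huv
  have hδ' : 0 < 1 - δ := by linarith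
  set K : ℝ := (1 - δ) * dist u v with hKdef
  have hK0 : 0 ≤ K := by positivity
  have hKlt : K < dist u v := by nlinarith
  set SU : Set ℝ :=
    {r | ∃ y, y ∉ A ∧ ∃ z, z ∉ A ∧ r = dist y u + dist z u - (1 - δ) * dist y z} with hSUdef
  have hSUne : SU.Nonempty := ⟨_, x₀, hx₀, x₀, hx₀, rfl⟩
  have hSU0 : ∀ r ∈ SU, (0:ℝ) ≤ r := by
    rintro r ⟨y, hy, z, hz, rfl⟩
    have ht := dist_triangle y u z
    rw [dist_comm u z] at ht
    nlinarith [dist_nonneg (x := y) (y := z)]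
  have hSUbdd : BddBelow SU := ⟨0, fun r hr => hSU0 r hr⟩
  set αm : ℝ := sInf SU with hαmdef
  have hαm0 : 0 ≤ αm := le_csInf hSUne hSU0
  set α : ℝ := min K (αm / 2) with hαdef
  set β : ℝ := K - α with hβdef
  have hα0 : 0 ≤ α := le_min hK0 (by linarith)
  have hαK : α ≤ K := min_le_left _ _
  have hβ0 : 0 ≤ β := by simp only [hβdef]; linarith
  have hβK : β ≤ K := by simp only [hβdef]; linarith
  have hαβ : α + β = K := by simp only [hβdef]; ring
  have hP2 : ∀ y, y ∉ A → ∀ z, z ∉ A →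
      2 * α ≤ dist y u + dist z u - (1 - δ) * dist y z := by
    intro y hy z hz
    have h1' : αm ≤ dist y u + dist z u - (1 - δ) * dist y z :=
      csInf_le hSUbdd ⟨y, hy, z, hz, rfl⟩
    have h2' : α ≤ αm / 2 := min_le_right _ _
    linarith
  have hP3 : ∀ z, z ∉ A → ∀ w, w ∉ A →
      2 * β ≤ dist z v + dist w v - (1 - δ) * dist z w := by
    intro z hz w hw
    have hge0 : 0 ≤ dist z v + dist w v - (1 - δ) * dist z w := by
      have ht := dist_triangle z v w
      rw [dist_comm v w] at ht
      nlinarith [dist_nonneg (x := z) (y := w)]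
    rcases le_total (αm / 2) K with hc | hc
    · have hmin : α = αm / 2 := min_eq_right hc
      have hlb : 2 * K - (dist z v + dist w v - (1 - δ) * dist z w) ≤ αm := by
        apply le_csInf hSUne
        rintro r ⟨y', hy', z', hz', rfl⟩
        have hh2 := h2 y' hy' z' hz' z hz w hw
        have hexp : (1 - δ) * (dist y' z' + dist z w + 2 * dist u v)
            = (1 - δ) * dist y' z' + (1 - δ) * dist z w + 2 * K := by
          rw [hKdef]; ring
        linarith
      have hb' : β = K - αm / 2 := by rw [hβdef, hmin]
      linarith
    · have hmin : α = K := min_eq_left hc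
      have : β = 0 := by rw [hβdef, hmin]; ring
      linarith
  have hP4u : ∀ z, z ∉ A → α ≤ dist z u := by
    intro z hz
    have := hP2 z hz z hz
    simp only [dist_self] at this
    linarith
  have hP4v : ∀ z, z ∉ A → β ≤ dist z v := by
    intro z hz
    have := hP3 z hz z hz
    simp only [dist_self] at this
    linarith
  -- the bump functions
  set φ : M → ℝ := fun x => max (dist x u) α - dist x u with hφdef
  set ψ : M → ℝ := fun x => max (dist x v) β - dist x v with hψdef
  have hφ0 : ∀ x, 0 ≤ φ x := fun x => by
    simp only [hφdef, sub_nonneg]; exact le_max_left _ _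
  have hψ0 : ∀ x, 0 ≤ ψ x := fun x => by
    simp only [hψdef, sub_nonneg]; exact le_max_left _ _
  have hφ_pos : ∀ x, 0 < φ x → dist x u < α ∧ φ x = α - dist x u := by
    intro x hx
    rcases lt_or_ge (dist x u) α with hlt | hle
    · exact ⟨hlt, by simp only [hφdef]; rw [max_eq_right hlt.le]⟩
    · exfalso; simp only [hφdef] at hx; rw [max_eq_left hle] at hx; linarith
  have hψ_pos : ∀ x, 0 < ψ x → dist x v < β ∧ ψ x = β - dist x v := by
    intro x hx
    rcases lt_or_ge (dist x v) β with hlt | hle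
    · exact ⟨hlt, by simp only [hψdef]; rw [max_eq_right hlt.le]⟩
    · exfalso; simp only [hψdef] at hx; rw [max_eq_left hle] at hx; linarith
  have hdisj : ∀ x, φ x = 0 ∨ ψ x = 0 := by
    intro x
    by_contra hcon
    push_neg at hcon
    obtain ⟨hc1, hc2⟩ := hcon
    have hφx := hφ_pos x (lt_of_le_of_ne (hφ0 x) (Ne.symm hc1))
    have hψx := hψ_pos x (lt_of_le_of_ne (hψ0 x) (Ne.symm hc2))
    have ht := dist_triangle u x v
    rw [dist_comm u x] at ht
    linarith [hφx.1, hψx.1]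
  set g : M → ℝ := fun x => φ x - ψ x with hgdef
  have hgA : ∀ x, x ∉ A → φ x = 0 ∧ ψ x = 0 := by
    intro x hx
    constructor
    · simp only [hφdef]; rw [max_eq_left (hP4u x hx)]; ring
    · simp only [hψdef]; rw [max_eq_left (hP4v x hx)]; ring
  have ghalf : ∀ x y, g x - g y ≤ dist x y := by
    intro x y
    rcases le_or_gt (φ x) (φ y) with hc1 | hc1
    · rcases le_or_gt (ψ y) (ψ x) with hc2 | hc2
      · simp only [hgdef]; linarith [dist_nonneg (x := x) (y := y)]
      · have hk := key2 (dist y v) (dist x v) β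
        have habs : |dist y v - dist x v| ≤ dist x y := by
          rw [abs_sub_comm]; exact abs_dist_sub_le x y v
        simp only [hgdef, hφdef, hψdef] at *
        linarith
    · rcases le_or_gt (ψ y) (ψ x) with hc2 | hc2
      · have hk := key2 (dist x u) (dist y u) α
        have habs : |dist x u - dist y u| ≤ dist x y := abs_dist_sub_le x y u
        simp only [hgdef, hφdef, hψdef] at *
        linarith
      · have hφx := hφ_pos x (lt_of_le_of_lt (hφ0 y) hc1)
        have hψy := hψ_pos y (lt_of_le_of_lt (hψ0 x) hc2)
        have hψx : ψ x = 0 := by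
          rcases hdisj x with hd | hd
          · exfalso; linarith [hφx.2, hφx.1]
          · exact hd
        have hφy : φ y = 0 := by
          rcases hdisj y with hd | hd
          · exact hd
          · exfalso; linarith [hψy.2, hψy.1]
        have ht := dist_triangle4 u x y v
        rw [dist_comm u x] at ht
        simp only [hgdef]
        rw [hψx, hφy, hφx.2, hψy.2]
        linarith
  have glip : LipWith 1 g := by
    intro x y
    rw [one_mul, abs_sub_le_iff]
    exact ⟨ghalf x y, by rw [dist_comm x y] at *; exact ghalf y x⟩
  have hgu : g u = α := by
    simp only [hgdef, hφdef, hψdef, dist_self]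
    rw [max_eq_right hα0, max_eq_left (by linarith : β ≤ dist u v)]
    ring
  have hgv : g v = -β := by
    simp only [hgdef, hφdef, hψdef, dist_self, dist_comm v u]
    rw [max_eq_left (by linarith : α ≤ dist u v), max_eq_right hβ0]
    ring
  have habsguv : |g u - g v| = K := by
    rw [hgu, hgv]
    rw [show α - -β = K by rw [← hαβ]; ring]
    exact abs_of_nonneg hK0
  refine ⟨g, glip, fun x hx => by simp only [hgdef, (hgA x hx).1, (hgA x hx).2]; ring,
    habsguv, ?_⟩
  intro h hh
  have hlip1 : ∀ a b : M, h a - h b ≤ (1 - δ) * dist a b := fun a b => (abs_le.mp (hh a b)).2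
  have hδle : ∀ a b : M, (1 - δ) * dist a b ≤ dist a b := by
    intro a b; nlinarith [dist_nonneg (x := a) (y := b)]
  set S : M → Set ℝ := fun x => (fun z => h z + dist x z) '' Aᶜ with hSdef
  have hSne : ∀ x, (S x).Nonempty := fun x => ⟨_, ⟨x₀, hx₀, rfl⟩⟩
  have hSbdd : ∀ x, BddBelow (S x) := by
    intro x
    refine ⟨h x₀ - dist x x₀, ?_⟩
    rintro r ⟨z, hz, rfl⟩
    have h1' := hlip1 x₀ z
    have h2' := hδle x₀ z
    have ht := dist_triangle x₀ x z
    rw [dist_comm x₀ x] at ht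
    simp only
    linarith
  set F : M → ℝ := fun x => sInf (S x) with hFdef
  have hFle : ∀ x z, z ∉ A → F x ≤ h z + dist x z := fun x z hz =>
    csInf_le (hSbdd x) ⟨z, hz, rfl⟩
  have hFge : ∀ (x : M) (b : ℝ), (∀ z, z ∉ A → b ≤ h z + dist x z) → b ≤ F x := by
    intro x b hb
    exact le_csInf (hSne x) (by rintro r ⟨z, hz, rfl⟩; exact hb z hz)
  have hFlip : ∀ x y, F x ≤ F y + dist x y := by
    intro x y
    have hb : F x - dist x y ≤ F y := by
      apply hFge
      intro z hz
      have := hFle x z hz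
      have ht := dist_triangle x y z
      linarith
    linarith
  have hFh : ∀ x, x ∉ A → F x = h x := by
    intro x hx
    refine le_antisymm ?_ (hFge x _ (fun z hz => ?_))
    · have := hFle x x hx
      simpa [dist_self] using this
    · have := hlip1 x z
      have := hδle x z
      linarith
  set cu : ℝ := min (F u - α) (F v - β + (dist u v - K)) with hcudef
  set cv : ℝ := min (F v - β) (F u - α + (dist u v - K)) with hcvdef
  have htK : (0:ℝ) ≤ dist u v - K := by linarith
  have hcu1 : cu ≤ F u - α := min_le_left _ _
  have hcu2 : cu ≤ F v - β + (dist u v - K) := min_le_right _ _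
  have hcv1 : cv ≤ F v - β := min_le_left _ _
  have hcv2 : cv ≤ F u - α + (dist u v - K) := min_le_right _ _
  have hcv_cu : cv ≤ cu + (dist u v - K) := by
    have hmin : cv - (dist u v - K) ≤ cu := le_min (by linarith) (by linarith)
    linarith
  have hcu_cv : cu ≤ cv + (dist u v - K) := by
    have hmin : cu - (dist u v - K) ≤ cv := le_min (by linarith) (by linarith)
    linarith
  set C1 : M → ℝ := fun x => F x - (φ x + ψ x) with hC1def
  set C2 : M → ℝ := fun x => cu + max (dist x u) α - α - ψ x with hC2def
  set C3 : M → ℝ := fun x => cv + max (dist x v) β - β - φ x with hC3def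
  set f : M → ℝ := fun x => min (C1 x) (min (C2 x) (C3 x)) with hfdef
  have hfC1 : ∀ x, f x ≤ C1 x := fun x => min_le_left _ _
  have hfC2 : ∀ x, f x ≤ C2 x := fun x => (min_le_right _ _).trans (min_le_left _ _)
  have hfC3 : ∀ x, f x ≤ C3 x := fun x => (min_le_right _ _).trans (min_le_right _ _)
  have hMu : ∀ x, max (dist x u) α = dist x u + φ x := fun x => by
    simp only [hφdef]; ring
  have hMv : ∀ x, max (dist x v) β = dist x v + ψ x := fun x => by
    simp only [hψdef]; ring
  have habs_pp : ∀ x y, ψ x = 0 → ψ y = 0 → |g x - g y| = |φ x - φ y| := by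
    intro x y hx hy
    simp only [hgdef, hx, hy, sub_zero]
  have habs_mm : ∀ x y, φ x = 0 → φ y = 0 → |g x - g y| = |ψ y - ψ x| := by
    intro x y hx hy
    simp only [hgdef, hx, hy]
    rw [show (0:ℝ) - ψ x - (0 - ψ y) = ψ y - ψ x by ring]
  have habs_pm : ∀ x y, ψ x = 0 → φ y = 0 → |g x - g y| = φ x + ψ y := by
    intro x y hx hy
    simp only [hgdef, hx, hy]
    rw [show φ x - 0 - (0 - ψ y) = φ x + ψ y by ring]
    exact abs_of_nonneg (by linarith [hφ0 x, hψ0 y])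
  have habs_mp : ∀ x y, φ x = 0 → ψ y = 0 → |g x - g y| = ψ x + φ y := by
    intro x y hx hy
    simp only [hgdef, hx, hy]
    rw [show (0:ℝ) - ψ x - (φ y - 0) = -(ψ x + φ y) by ring, abs_neg]
    exact abs_of_nonneg (by linarith [hψ0 x, hφ0 y])
  -- f agrees with h off A
  have hEu : ∀ x, x ∉ A → h x + α - dist x u ≤ cu := by
    intro x hx
    refine le_min ?_ ?_
    · have hb : h x + 2 * α - dist x u ≤ F u := by
        apply hFge
        intro z hz
        have hp2 := hP2 x hx z hz
        have hl := hlip1 x z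
        rw [dist_comm u z]
        linarith
      linarith
    · have hb : h x + 2 * K - dist u v - dist x u ≤ F v := by
        apply hFge
        intro z hz
        have hh1 := h1 x hx z hz
        have hl := hlip1 x z
        have hexp : (1 - δ) * (dist x z + dist u v) = (1 - δ) * dist x z + K := by
          rw [hKdef]; ring
        rw [dist_comm v z]
        linarith
      linarith [hαβ]
  have hEv : ∀ x, x ∉ A → h x + β - dist x v ≤ cv := by
    intro x hx
    refine le_min ?_ ?_
    · have hb : h x + 2 * β - dist x v ≤ F v := by
        apply hFge
        intro z hz
        have hp3 := hP3 x hx z hz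
        have hl := hlip1 x z
        rw [dist_comm v z]
        linarith
      linarith
    · have hb : h x + 2 * K - dist u v - dist x v ≤ F u := by
        apply hFge
        intro z hz
        have hh1 := h1 z hz x hx
        rw [dist_comm z x] at hh1
        have hl := hlip1 x z
        have hexp : (1 - δ) * (dist x z + dist u v) = (1 - δ) * dist x z + K := by
          rw [hKdef]; ring
        rw [dist_comm u z]
        linarith
      linarith [hαβ]
  have hfA : ∀ x, x ∉ A → f x = h x := by
    intro x hx
    obtain ⟨hφx, hψx⟩ := hgA x hx
    have hFx := hFh x hx
    refine le_antisymm ?_ ?_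
    · have hc := hfC1 x
      simp only [hC1def] at hc
      rw [hφx, hψx, hFx] at hc
      linarith
    · refine le_min ?_ (le_min ?_ ?_)
      · simp only [hC1def]
        rw [hφx, hψx, hFx]
        linarith
      · simp only [hC2def]
        rw [hMu x, hφx, hψx]
        have := hEu x hx
        linarith
      · simp only [hC3def]
        rw [hMv x, hφx, hψx]
        have := hEv x hx
        linarith
  -- the component inequalities
  have hI2 : ∀ x y, 0 < φ y → C2 x ≤ C1 y + (dist x y - |g x - g y|) := by
    intro x y hφy
    obtain ⟨hpy, hφyeq⟩ := hφ_pos y hφy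
    have hψy : ψ y = 0 := (hdisj y).resolve_left (ne_of_gt hφy)
    have hcu' : cu ≤ F y - φ y := by
      have hFuy := hFlip u y
      rw [dist_comm u y] at hFuy
      linarith
    rcases eq_or_lt_of_le (hφ0 x) with hx0 | hx0
    · have hφx : φ x = 0 := hx0.symm
      have habs : |g x - g y| = ψ x + φ y := habs_mp x y hφx hψy
      have hdle : dist x u - dist y u ≤ dist x y :=
        (le_abs_self _).trans (abs_dist_sub_le x y u)
      simp only [hC2def, hC1def]
      rw [hMu x, habs, hφx, hψy]
      linarith
    · have hψx : ψ x = 0 := (hdisj x).resolve_left (ne_of_gt hx0)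
      obtain ⟨hpx, hφxeq⟩ := hφ_pos x hx0
      have habs : |g x - g y| = |φ x - φ y| := habs_pp x y hψx hψy
      have habs2 : |φ x - φ y| ≤ dist x y := by
        rw [hφxeq, hφyeq,
          show α - dist x u - (α - dist y u) = -(dist x u - dist y u) by ring, abs_neg]
        exact abs_dist_sub_le x y u
      simp only [hC2def, hC1def]
      rw [hMu x, habs, hψx, hψy]
      linarith
  have hI3 : ∀ x y, 0 < ψ y → C3 x ≤ C1 y + (dist x y - |g x - g y|) := by
    intro x y hψy
    obtain ⟨hqy, hψyeq⟩ := hψ_pos y hψy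
    have hφy : φ y = 0 := by
      rcases hdisj y with hd | hd
      · exact hd
      · exfalso; rw [hd] at hψy; exact lt_irrefl 0 hψy
    have hcv' : cv ≤ F y - ψ y := by
      have hFvy := hFlip v y
      rw [dist_comm v y] at hFvy
      linarith
    rcases eq_or_lt_of_le (hψ0 x) with hx0 | hx0
    · have hψx : ψ x = 0 := hx0.symm
      have habs : |g x - g y| = φ x + ψ y := habs_pm x y hψx hφy
      have hdle : dist x v - dist y v ≤ dist x y :=
        (le_abs_self _).trans (abs_dist_sub_le x y v)
      simp only [hC3def, hC1def]
      rw [hMv x, habs, hψx, hφy]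
      linarith
    · have hφx : φ x = 0 := by
        rcases hdisj x with hd | hd
        · exact hd
        · exfalso; rw [hd] at hx0; exact lt_irrefl 0 hx0
      obtain ⟨hqx, hψxeq⟩ := hψ_pos x hx0
      have habs : |g x - g y| = |ψ y - ψ x| := habs_mm x y hφx hφy
      have habs2 : |ψ y - ψ x| ≤ dist x y := by
        rw [hψxeq, hψyeq,
          show β - dist y v - (β - dist x v) = dist x v - dist y v by ring]
        exact abs_dist_sub_le x y v
      simp only [hC3def, hC1def]
      rw [hMv x, habs, hφx, hφy]
      linarith
  have hI4a : ∀ x y, ψ y = 0 → C2 x ≤ C2 y + (dist x y - |g x - g y|) := by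
    intro x y hψy
    rcases hdisj x with hφx | hψx
    · have habs : |g x - g y| = ψ x + φ y := habs_mp x y hφx hψy
      have hdle : dist x u - dist y u ≤ dist x y :=
        (le_abs_self _).trans (abs_dist_sub_le x y u)
      simp only [hC2def]
      rw [hMu x, hMu y, habs, hφx, hψy]
      linarith
    · have habs : |g x - g y| = |φ x - φ y| := habs_pp x y hψx hψy
      have hk := key1 (dist x u) (dist y u) α
      have hdle : |dist x u - dist y u| ≤ dist x y := abs_dist_sub_le x y u
      have hφx' : φ x = max (dist x u) α - dist x u := by simp only [hφdef]
      have hφy' : φ y = max (dist y u) α - dist y u := by simp only [hφdef]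
      simp only [hC2def]
      rw [habs, hψx, hψy, hφx', hφy']
      linarith
  have hI5a : ∀ x y, φ y = 0 → C3 x ≤ C3 y + (dist x y - |g x - g y|) := by
    intro x y hφy
    rcases hdisj x with hφx | hψx
    · have habs : |g x - g y| = |ψ y - ψ x| := habs_mm x y hφx hφy
      have habs' : |g x - g y| = |ψ x - ψ y| := by rw [habs, abs_sub_comm]
      have hk := key1 (dist x v) (dist y v) β
      have hdle : |dist x v - dist y v| ≤ dist x y := abs_dist_sub_le x y v
      have hψx' : ψ x = max (dist x v) β - dist x v := by simp only [hψdef]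
      have hψy' : ψ y = max (dist y v) β - dist y v := by simp only [hψdef]
      simp only [hC3def]
      rw [habs', hφx, hφy, hψx', hψy']
      linarith
    · have habs : |g x - g y| = φ x + ψ y := habs_pm x y hψx hφy
      have hdle : dist x v - dist y v ≤ dist x y :=
        (le_abs_self _).trans (abs_dist_sub_le x y v)
      simp only [hC3def]
      rw [hMv x, hMv y, habs, hψx, hφy]
      linarith
  have hLcmp : ∀ y, 0 < ψ y → C3 y ≤ C2 y := by
    intro y hψy
    obtain ⟨hqy, hψyeq⟩ := hψ_pos y hψy
    have hφy : φ y = 0 := by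
      rcases hdisj y with hd | hd
      · exact hd
      · exfalso; rw [hd] at hψy; exact lt_irrefl 0 hψy
    have ht : dist u v ≤ dist y u + dist y v := by
      have := dist_triangle u y v
      rw [dist_comm u y] at this
      linarith
    simp only [hC2def, hC3def]
    rw [hMu y, hMv y, hφy]
    linarith [hcv_cu, hαβ]
  have hLcmp' : ∀ y, 0 < φ y → C2 y ≤ C3 y := by
    intro y hφy
    obtain ⟨hpy, hφyeq⟩ := hφ_pos y hφy
    have hψy : ψ y = 0 := (hdisj y).resolve_left (ne_of_gt hφy)
    have ht : dist u v ≤ dist y u + dist y v := by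
      have := dist_triangle u y v
      rw [dist_comm u y] at this
      linarith
    simp only [hC2def, hC3def]
    rw [hMu y, hMv y, hψy]
    linarith [hcu_cv, hαβ]
  have hM1 : ∀ x y, f x ≤ C1 y + (dist x y - |g x - g y|) := by
    intro x y
    rcases lt_or_ge 0 (φ y) with hy | hy
    · exact (hfC2 x).trans (hI2 x y hy)
    · rcases lt_or_ge 0 (ψ y) with hy2 | hy2
      · exact (hfC3 x).trans (hI3 x y hy2)
      · have hφy : φ y = 0 := le_antisymm hy (hφ0 y)
        have hψy : ψ y = 0 := le_antisymm hy2 (hψ0 y)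
        have habs : |g x - g y| = φ x + ψ x := by
          rcases hdisj x with hd | hd
          · rw [habs_mp x y hd hψy, hd, hφy]; ring
          · rw [habs_pm x y hd hφy, hd, hψy]
        have hFl := hFlip x y
        refine (hfC1 x).trans ?_
        simp only [hC1def]
        rw [habs, hφy, hψy]
        linarith
  have hM2 : ∀ x y, f x ≤ C2 y + (dist x y - |g x - g y|) := by
    intro x y
    rcases lt_or_ge 0 (ψ y) with hy | hy
    · have hφy : φ y = 0 := by
        rcases hdisj y with hd | hd
        · exact hd
        · exfalso; rw [hd] at hy; exact lt_irrefl 0 hy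
      have := (hfC3 x).trans (hI5a x y hφy)
      have hcmp := hLcmp y hy
      linarith
    · have hψy : ψ y = 0 := le_antisymm hy (hψ0 y)
      exact (hfC2 x).trans (hI4a x y hψy)
  have hM3 : ∀ x y, f x ≤ C3 y + (dist x y - |g x - g y|) := by
    intro x y
    rcases lt_or_ge 0 (φ y) with hy | hy
    · have hψy : ψ y = 0 := (hdisj y).resolve_left (ne_of_gt hy)
      have := (hfC2 x).trans (hI4a x y hψy)
      have hcmp := hLcmp' y hy
      linarith
    · have hφy : φ y = 0 := le_antisymm hy (hφ0 y)
      exact (hfC3 x).trans (hI5a x y hφy)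
  have master : ∀ x y, f x ≤ f y + (dist x y - |g x - g y|) := by
    intro x y
    have m1 := hM1 x y
    have m2 := hM2 x y
    have m3 := hM3 x y
    have hy' : f y = min (C1 y) (min (C2 y) (C3 y)) := by simp only [hfdef]
    have hmin : f x - (dist x y - |g x - g y|) ≤ min (C1 y) (min (C2 y) (C3 y)) :=
      le_min (by linarith) (le_min (by linarith) (by linarith))
    rw [← hy'] at hmin
    linarith
  refine ⟨f, hfA, ?_, ?_⟩
  · intro x y
    have m1 := master x y
    have m2 := master y x
    rw [dist_comm y x, abs_sub_comm (g y) (g x)] at m2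
    have habsf : |f x - f y| ≤ dist x y - |g x - g y| :=
      abs_sub_le_iff.mpr ⟨by linarith, by linarith⟩
    rw [one_mul]
    show |(f x + g x) - (f y + g y)| ≤ dist x y
    rw [show (f x + g x) - (f y + g y) = (f x - f y) + (g x - g y) by ring]
    calc |(f x - f y) + (g x - g y)| ≤ |f x - f y| + |g x - g y| := abs_add_le _ _
      _ ≤ dist x y := by linarith
  · intro x y
    have m1 := master x y
    have m2 := master y x
    rw [dist_comm y x, abs_sub_comm (g y) (g x)] at m2
    have habsf : |f x - f y| ≤ dist x y - |g x - g y| :=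
      abs_sub_le_iff.mpr ⟨by linarith, by linarith⟩
    rw [one_mul]
    show |(f x - g x) - (f y - g y)| ≤ dist x y
    rw [show (f x - g x) - (f y - g y) = (f x - f y) + -(g x - g y) by ring]
    calc |(f x - f y) + -(g x - g y)| ≤ |f x - f y| + |-(g x - g y)| := abs_add_le _ _
      _ = |f x - f y| + |g x - g y| := by rw [abs_neg]
      _ ≤ dist x y := by linarith
end

section
/- Let M be a metric space, let 0 < δ < 1, let A ⊆ M be a subset with M ∖ A nonempty, and let u, v ∈ A with u ≠ v be such that (1−δ)(d(x,y) + d(u,v)) ≤ d(x,u) + d(y,v) for all x, y ∈ M ∖ A. Then for every (1−δ)-Lipschitz function h : M → ℝ there exists a 1-Lipschitz function f : M → ℝ with f(x) = h(x) for all x ∈ M ∖ A and f(u) − f(v) ≥ (1−δ)·d(u,v). -/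
/-- If `A ⊆ M` (with `M ∖ A` nonempty) and `u ≠ v` in `A` satisfy the `(1-δ)`-long trapezoid
inequality for points outside `A`, then every `(1-δ)`-Lipschitz `h` admits a `1`-Lipschitz `f`
agreeing with `h` off `A` with `f(u) - f(v) ≥ (1-δ)·d(u,v)`. -/
theorem trapezoid_extension (M : Type*) [MetricSpace M]
    (δ : ℝ) (hδ0 : 0 < δ) (hδ1 : δ < 1)
    (A : Set M) (hA : ∃ x, x ∉ A)
    (u v : M) (hu : u ∈ A) (hv : v ∈ A) (huv : u ≠ v)
    (h1 : ∀ x ∉ A, ∀ y ∉ A,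
      (1 - δ) * (dist x y + dist u v) ≤ dist x u + dist y v) :
    ∀ h : M → ℝ, LipWith (1 - δ) h →
      ∃ f : M → ℝ, LipWith 1 f ∧ (∀ x ∉ A, f x = h x) ∧
        (1 - δ) * dist u v ≤ f u - f v := by
  intro h hh
  obtain ⟨x₀, hx₀⟩ := hA
  set c : ℝ := (1 - δ) * dist u v with hc
  -- basic: h x - h y ≤ (1-δ) * dist x y ≤ dist x y
  have hle : ∀ x y : M, h x - h y ≤ dist x y := by
    intro x y
    have := (abs_le.mp (hh x y)).2
    nlinarith [dist_nonneg (x := x) (y := y)]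
  set S : M → Set ℝ := fun x => (fun y => h y + dist x y) '' Aᶜ with hS
  have hSne : ∀ x, (S x).Nonempty := fun x => ⟨h x₀ + dist x x₀, x₀, hx₀, rfl⟩
  have hSbdd : ∀ x, BddBelow (S x) := by
    intro x
    refine ⟨h x, ?_⟩
    rintro a ⟨y, hy, rfl⟩
    have := hle x y
    dsimp only
    linarith
  set E : M → ℝ := fun x => sInf (S x) with hE
  have hEle : ∀ x, ∀ y ∉ A, E x ≤ h y + dist x y := by
    intro x y hy
    exact csInf_le (hSbdd x) ⟨y, hy, rfl⟩
  have hEge : ∀ x, h x ≤ E x := by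
    intro x
    refine le_csInf (hSne x) ?_
    rintro a ⟨y, hy, rfl⟩
    have := hle x y
    dsimp only
    linarith
  have hElip : ∀ x y : M, E x - E y ≤ dist x y := by
    intro x y
    have : E x - dist x y ≤ E y := by
      refine le_csInf (hSne y) ?_
      rintro a ⟨z, hz, rfl⟩
      have h2 := hEle x z hz
      have h3 : dist x z ≤ dist x y + dist y z := dist_triangle x y z
      dsimp only
      linarith
    linarith
  -- E = h off A
  have hEeq : ∀ x ∉ A, E x = h x := by
    intro x hx
    refine le_antisymm ?_ (hEge x)
    have := hEle x x hx
    simpa using this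
  -- E v ≥ h x - dist x v for x ∉ A
  have hEv : ∀ x ∉ A, h x - dist x v ≤ E v := by
    intro x hx
    refine le_csInf (hSne v) ?_
    rintro a ⟨y, hy, rfl⟩
    have h2 := hle x y
    have h3 : dist x y ≤ dist x v + dist v y := dist_triangle x v y
    have h4 : dist v y = dist y v := dist_comm v y
    dsimp only
    linarith
  -- E u ≥ h x + c - dist x v for x ∉ A
  have hEu : ∀ x ∉ A, h x + c - dist x v ≤ E u := by
    intro x hx
    refine le_csInf (hSne u) ?_
    rintro a ⟨y, hy, rfl⟩
    have h2 := (abs_le.mp (hh x y)).2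
    have h3 := h1 y hy x hx
    have h4 : dist y x = dist x y := dist_comm y x
    have h5 : dist u y = dist y u := dist_comm u y
    dsimp only
    nlinarith
  set β : ℝ := min (E v) (E u - c) with hβ
  refine ⟨fun x => min (E x) (β + dist x v), ?_, ?_, ?_⟩
  · -- 1-Lipschitz
    intro x y
    have h2 : |min (E x) (β + dist x v) - min (E y) (β + dist y v)| ≤
        max (|E x - E y|) (|β + dist x v - (β + dist y v)|) :=
      abs_min_sub_min_le_max _ _ _ _
    have h3 : |E x - E y| ≤ dist x y := by
      rw [abs_le]
      constructor
      · have := hElip y x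
        rw [dist_comm y x] at this
        linarith
      · exact hElip x y
    have h4 : |β + dist x v - (β + dist y v)| ≤ dist x y := by
      have : β + dist x v - (β + dist y v) = dist x v - dist y v := by ring
      rw [this]
      exact abs_dist_sub_le x y v
    rw [one_mul]
    exact h2.trans (max_le h3 h4)
  · -- agrees with h off A
    intro x hx
    show min (E x) (β + dist x v) = h x
    rw [min_eq_left]
    · exact hEeq x hx
    rw [hEeq x hx]
    rcases le_total (E v) (E u - c) with hcase | hcase
    · have hβv : β = E v := min_eq_left hcase
      have := hEv x hx
      rw [hβv]; linarith
    · have hβu : β = E u - c := min_eq_right hcase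
      have := hEu x hx
      rw [hβu]; linarith
  · -- gap at u, v
    have hfv : min (E v) (β + dist v v) = β := by
      rw [dist_self, add_zero]
      exact min_eq_right (min_le_left _ _)
    have hc_le : c ≤ dist u v := by
      have := dist_nonneg (x := u) (y := v)
      nlinarith
    have hfu : β + c ≤ min (E u) (β + dist u v) := by
      refine le_min ?_ (by linarith)
      have := min_le_right (E v) (E u - c)
      rw [← hβ] at this
      linarith
    show c ≤ min (E u) (β + dist u v) - min (E v) (β + dist v v)
    rw [hfv]
    linarith
end

section
/- Let M be a metric space, let 0 < δ < 1, let θ ∈ (0,1) satisfy θ/(1−θ) < δ/2, let r > 0, and let u, v ∈ M with u ≠ v and d(u,v) < θr. Then for every (1−δ)-Lipschitz function h : M → ℝ there exists a 1-Lipschitz function f : M → ℝ such that f(x) = h(x) for all x ∈ M ∖ B(u,r), f(u) = h(u), and f(v) = h(u) − (1−δ)·d(u,v). -/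
open Metric

/-- Let `0 < δ < 1`, `θ ∈ (0,1)` with `θ/(1-θ) < δ/2`, `r > 0`, and `u ≠ v` with
`d(u,v) < θr`. Then every `(1-δ)`-Lipschitz `h : M → ℝ` admits a `1`-Lipschitz `f`
agreeing with `h` off `B(u,r)` with `f(u) = h(u)` and `f(v) = h(u) - (1-δ)·d(u,v)`. -/
theorem perturb_on_ball (M : Type*) [MetricSpace M]
    (δ θ r : ℝ) (hδ0 : 0 < δ) (hδ1 : δ < 1) (hθ0 : 0 < θ) (hθ1 : θ < 1)
    (hθδ : θ / (1 - θ) < δ / 2) (hr : 0 < r)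
    (u v : M) (huv : u ≠ v) (hd : dist u v < θ * r)
    (h : M → ℝ) (hh : LipWith (1 - δ) h) :
    ∃ f : M → ℝ, LipWith 1 f ∧ (∀ x ∉ ball u r, f x = h x) ∧
      f u = h u ∧ f v = h u - (1 - δ) * dist u v := by
  set c : ℝ := (1 - δ) * dist u v with hc
  have h1θ : 0 < 1 - θ := by linarith
  have hkey : 2 * θ < δ * (1 - θ) := by
    nlinarith [(div_lt_div_iff₀ h1θ (by norm_num : (0:ℝ) < 2)).mp hθδ]
  have hθ2 : θ * (2 - δ) < δ := by nlinarith
  have hduv : 0 ≤ dist u v := dist_nonneg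
  refine ⟨fun x => min (h x) (h u - c + dist x v), ?_, ?_, ?_, ?_⟩
  · intro x y
    refine (abs_min_sub_min_le_max _ _ _ _).trans (max_le ?_ ?_)
    · calc |h x - h y| ≤ (1 - δ) * dist x y := hh x y
        _ ≤ 1 * dist x y := by
          have := dist_nonneg (x := x) (y := y); nlinarith
    · have heq : (h u - c + dist x v) - (h u - c + dist y v) = dist x v - dist y v := by
        ring
      rw [heq]
      simpa using abs_dist_sub_le x y v
  · intro x hx
    simp only [mem_ball, not_lt] at hx
    have h1 : h x - h u ≤ (1 - δ) * dist x u := le_trans (le_abs_self _) (hh x u)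
    have h2 : dist x u - dist u v ≤ dist x v := by
      have := dist_triangle x v u
      have := dist_comm u v
      have := dist_comm v u
      linarith [dist_triangle x v u, (dist_comm v u ▸ rfl : dist v u = dist u v)]
    have h3 : (2 - δ) * dist u v < δ * r := by
      calc (2 - δ) * dist u v ≤ (2 - δ) * (θ * r) := by nlinarith
        _ = θ * (2 - δ) * r := by ring
        _ < δ * r := by nlinarith
    have h4 : δ * r ≤ δ * dist x u := by nlinarith
    have : h x ≤ h u - c + dist x v := by
      simp only [hc]; nlinarith
    exact min_eq_left this
  · have : h u ≤ h u - c + dist u v := by simp only [hc]; nlinarith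
    simp [min_eq_left this]
  · have h1 : h u - h v ≤ (1 - δ) * dist u v := le_trans (le_abs_self _) (hh u v)
    have : h u - c + dist v v ≤ h v := by simp only [hc, dist_self]; linarith
    simp [min_eq_right this, hc]; linarith
end

section
/- Let M be a metric space, let 0 < δ < 1, let θ ∈ (0,1) satisfy θ/(1−θ) < δ/2, let u, v ∈ M with u ≠ v, and let r, s > 0 satisfy d(u,v) < θr and s < θ·d(u,v). Set A = B(u,r) ∖ B(u,s). Then for every (1−δ)-Lipschitz function h : M → ℝ there exists a 1-Lipschitz function f : M → ℝ such that f(x) = h(x) for all x ∈ M ∖ A (in particular f(u) = h(u)) and f(v) = h(u) − (1−δ)·d(u,v). -/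
open Metric

/-- Let `0 < δ < 1`, `θ ∈ (0,1)` with `θ/(1-θ) < δ/2`, `u ≠ v`, and `r, s > 0` with
`d(u,v) < θr` and `s < θ·d(u,v)`. Set `A = B(u,r) ∖ B(u,s)`. Then every `(1-δ)`-Lipschitz
`h : M → ℝ` admits a `1`-Lipschitz `f` agreeing with `h` off `A` (in particular
`f(u) = h(u)`) with `f(v) = h(u) - (1-δ)·d(u,v)`. -/
theorem perturb_on_annulus (M : Type*) [MetricSpace M]
    (δ θ r s : ℝ) (hδ0 : 0 < δ) (hδ1 : δ < 1) (hθ0 : 0 < θ) (hθ1 : θ < 1)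
    (hθδ : θ / (1 - θ) < δ / 2) (hr : 0 < r) (hs : 0 < s)
    (u v : M) (huv : u ≠ v) (hd : dist u v < θ * r) (hsd : s < θ * dist u v)
    (h : M → ℝ) (hh : LipWith (1 - δ) h) :
    ∃ f : M → ℝ, LipWith 1 f ∧ (∀ x ∉ ball u r \ ball u s, f x = h x) ∧
      f u = h u ∧ f v = h u - (1 - δ) * dist u v := by
  have hd0 : 0 < dist u v := dist_pos.mpr huv
  have hθδ' : 2 * θ < δ * (1 - θ) := by
    have h1θ : 0 < 1 - θ := by linarith
    rw [div_lt_div_iff₀ h1θ (by norm_num : (0:ℝ) < 2)] at hθδ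
    linarith
  set G : M → ℝ := fun x => h u - (1 - δ) * dist u v + dist x v with hG
  refine ⟨fun x => min (h x) (G x), ?_, ?_, ?_, ?_⟩
  · intro x y
    have h1 := abs_min_sub_min_le_max (h x) (G x) (h y) (G y)
    have h2 : |h x - h y| ≤ (1 - δ) * dist x y := hh x y
    have h3 : |G x - G y| ≤ dist x y := by
      simp only [hG]
      have := abs_dist_sub_le x y v
      have e : h u - (1 - δ) * dist u v + dist x v - (h u - (1 - δ) * dist u v + dist y v)
          = dist x v - dist y v := by ring
      rw [e]; exact this
    have h4 : (1 - δ) * dist x y ≤ 1 * dist x y := by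
      have := dist_nonneg (x := x) (y := y); nlinarith
    calc |min (h x) (G x) - min (h y) (G y)| ≤ max |h x - h y| |G x - G y| := h1
      _ ≤ 1 * dist x y := max_le (h2.trans h4) (by linarith)
  · intro x hx
    have hxle : h x ≤ G x := by
      simp only [Set.mem_diff, mem_ball, not_and, not_not] at hx
      have hux : |h u - h x| ≤ (1 - δ) * dist u x := hh u x
      have habs : h x - h u ≤ (1 - δ) * dist u x := by
        have := abs_le.mp hux; linarith [this.1]
      by_cases hxr : dist x u < r
      · -- then dist x u < s (inner ball case)
        have hxs : dist x u < s := hx hxr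
        have htri : dist u v ≤ dist u x + dist x v := dist_triangle u x v
        have hdx : dist u x < s := by rwa [dist_comm]
        have hs' : s < θ * dist u v := hsd
        simp only [hG]
        nlinarith [dist_nonneg (x := u) (y := x), hd0]
      · -- outer case: dist x u ≥ r
        push_neg at hxr
        have htri : dist u x ≤ dist u v + dist v x := dist_triangle u v x
        have hdx : r ≤ dist u x := by rwa [dist_comm] at hxr
        have hvx : dist x v = dist v x := dist_comm x v
        simp only [hG]
        nlinarith [hd0]
    exact min_eq_left hxle
  · have : h u ≤ G u := by
      simp only [hG]
      nlinarith [hd0]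
    exact min_eq_left this
  · have hle : G v ≤ h v := by
      simp only [hG, dist_self, add_zero]
      have := abs_le.mp (hh u v)
      linarith [this.1]
    show min (h v) (G v) = _
    rw [min_eq_right hle]
    simp [hG]
end

section
/- Let M be a metric space, let 0 < δ < 1, let θ ∈ (0,1) satisfy θ/(1−θ) < δ/2, let u ∈ M, let u₁, v₁ ∈ M with u₁ ≠ v₁, u₁ ≠ u, and v₁ ≠ u, and let r, s > 0 satisfy max{d(u,u₁), d(u,v₁)} < θr and s < θ·min{d(u,u₁), d(u,v₁)}. Set A = B(u,r) ∖ B(u,s). Then for every (1−δ)-Lipschitz function h : M → ℝ there exists a 1-Lipschitz function f : M → ℝ such that f(x) = h(x) for all x ∈ M ∖ A, f(u₁) = h(u) + (1−δ)·d(u,u₁), and f(v₁) = f(u₁) − (1−δ)·d(u₁,v₁); in particular f(u₁) − f(v₁) = (1−δ)·d(u₁,v₁). -/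
open Metric

private lemma key_arith (δ θ t c w : ℝ) (hδ0 : 0 < δ) (hδ1 : δ < 1) (hθ0 : 0 < θ)
    (h2θ : 2 * θ < δ * (1 - θ)) (ht : 0 ≤ t) (hc : 0 ≤ c)
    (hw1 : t - c ≤ w) (hw2 : c - t ≤ w)
    (hor : c ≤ θ * t ∨ t ≤ θ * c) : (1 - δ) * (t + c) ≤ w := by
  rcases hor with hle | hle
  · nlinarith [mul_nonneg hδ0.le ht, mul_nonneg hδ0.le hc]
  · nlinarith [mul_nonneg hδ0.le ht, mul_nonneg hδ0.le hc]

/-- Let `0 < δ < 1`, `θ ∈ (0,1)` with `θ/(1-θ) < δ/2`, let `u₁ ≠ v₁` both different from `u`,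
and let `r, s > 0` with `max{d(u,u₁), d(u,v₁)} < θr` and `s < θ·min{d(u,u₁), d(u,v₁)}`.
Set `A = B(u,r) ∖ B(u,s)`. Then every `(1-δ)`-Lipschitz `h : M → ℝ` admits a `1`-Lipschitz
`f` agreeing with `h` off `A`, with `f(u₁) = h(u) + (1-δ)·d(u,u₁)` and
`f(v₁) = f(u₁) - (1-δ)·d(u₁,v₁)`; in particular `f(u₁) - f(v₁) = (1-δ)·d(u₁,v₁)`. -/
theorem perturb_on_annulus_pair (M : Type*) [MetricSpace M]
    (δ θ r s : ℝ) (hδ0 : 0 < δ) (hδ1 : δ < 1) (hθ0 : 0 < θ) (hθ1 : θ < 1)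
    (hθδ : θ / (1 - θ) < δ / 2) (hr : 0 < r) (hs : 0 < s)
    (u u₁ v₁ : M) (huv : u₁ ≠ v₁) (hu₁ : u₁ ≠ u) (hv₁ : v₁ ≠ u)
    (hmax : max (dist u u₁) (dist u v₁) < θ * r)
    (hmin : s < θ * min (dist u u₁) (dist u v₁))
    (h : M → ℝ) (hh : LipWith (1 - δ) h) :
    ∃ f : M → ℝ, LipWith 1 f ∧ (∀ x ∉ ball u r \ ball u s, f x = h x) ∧
      f u₁ = h u + (1 - δ) * dist u u₁ ∧
      f v₁ = f u₁ - (1 - δ) * dist u₁ v₁ ∧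
      f u₁ - f v₁ = (1 - δ) * dist u₁ v₁ := by
  have hθ1' : (0:ℝ) < 1 - θ := by linarith
  have h2θ : 2 * θ < δ * (1 - θ) := by
    rw [div_lt_div_iff₀ hθ1' (by norm_num : (0:ℝ) < 2)] at hθδ
    linarith
  set a : ℝ := h u + (1 - δ) * dist u u₁ with ha
  set b : ℝ := a - (1 - δ) * dist u₁ v₁ with hb
  set f : M → ℝ := fun x =>
    min (min (max (max (h x) (a - dist u₁ x)) (b - dist v₁ x)) (a + dist u₁ x))
      (b + dist v₁ x) with hf
  have hδ1' : (0:ℝ) ≤ 1 - δ := by linarith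
  have hDnn : (0:ℝ) ≤ dist u₁ v₁ := dist_nonneg
  have hba : b ≤ a := by
    have : (0:ℝ) ≤ (1 - δ) * dist u₁ v₁ := mul_nonneg hδ1' hDnn
    linarith
  -- f is 1-Lipschitz
  have hfLip : LipWith 1 f := by
    intro x y
    have hd : ∀ w : M, |dist w x - dist w y| ≤ dist x y := by
      intro w
      rw [dist_comm w x, dist_comm w y]
      exact abs_dist_sub_le x y w
    have c1 : |h x - h y| ≤ dist x y := by
      have h1 := hh x y
      have h2 : (0:ℝ) ≤ δ * dist x y := mul_nonneg hδ0.le dist_nonneg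
      have h3 : (1 - δ) * dist x y = dist x y - δ * dist x y := by ring
      linarith
    have c2 : |(a - dist u₁ x) - (a - dist u₁ y)| ≤ dist x y := by
      have e : (a - dist u₁ x) - (a - dist u₁ y) = dist u₁ y - dist u₁ x := by ring
      rw [e, abs_sub_comm]; exact hd u₁
    have c3 : |(b - dist v₁ x) - (b - dist v₁ y)| ≤ dist x y := by
      have e : (b - dist v₁ x) - (b - dist v₁ y) = dist v₁ y - dist v₁ x := by ring
      rw [e, abs_sub_comm]; exact hd v₁
    have c4 : |(a + dist u₁ x) - (a + dist u₁ y)| ≤ dist x y := by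
      have e : (a + dist u₁ x) - (a + dist u₁ y) = dist u₁ x - dist u₁ y := by ring
      rw [e]; exact hd u₁
    have c5 : |(b + dist v₁ x) - (b + dist v₁ y)| ≤ dist x y := by
      have e : (b + dist v₁ x) - (b + dist v₁ y) = dist v₁ x - dist v₁ y := by ring
      rw [e]; exact hd v₁
    have L1 : |max (max (h x) (a - dist u₁ x)) (b - dist v₁ x) -
        max (max (h y) (a - dist u₁ y)) (b - dist v₁ y)| ≤ dist x y :=
      (abs_max_sub_max_le_max _ _ _ _).trans
        (max_le ((abs_max_sub_max_le_max _ _ _ _).trans (max_le c1 c2)) c3)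
    have : |f x - f y| ≤ dist x y :=
      (abs_min_sub_min_le_max _ _ _ _).trans
        (max_le ((abs_min_sub_min_le_max _ _ _ _).trans (max_le L1 c4)) c5)
    simpa using this
  -- agreement off the annulus
  have hoff : ∀ x ∉ ball u r \ ball u s, f x = h x := by
    intro x hx
    have hx' : r ≤ dist u x ∨ dist u x < s := by
      rw [Set.mem_diff, mem_ball, mem_ball, dist_comm x u] at hx
      push_neg at hx
      rcases lt_or_ge (dist u x) r with h1 | h1
      · exact Or.inr (hx h1)
      · exact Or.inl h1
    set t : ℝ := dist u x with htdef
    have htnn : (0:ℝ) ≤ t := dist_nonneg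
    have hd₁nn : (0:ℝ) ≤ dist u u₁ := dist_nonneg
    have hd₂nn : (0:ℝ) ≤ dist u v₁ := dist_nonneg
    have hor₁ : dist u u₁ ≤ θ * t ∨ t ≤ θ * dist u u₁ := by
      rcases hx' with hfar | hnear
      · left
        have : dist u u₁ ≤ θ * r := le_of_lt (lt_of_le_of_lt (le_max_left _ _) hmax)
        exact this.trans (mul_le_mul_of_nonneg_left hfar hθ0.le)
      · right
        have : s ≤ θ * dist u u₁ := le_of_lt (lt_of_lt_of_le hmin
          (mul_le_mul_of_nonneg_left (min_le_left _ _) hθ0.le))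
        linarith
    have hor₂ : dist u v₁ ≤ θ * t ∨ t ≤ θ * dist u v₁ := by
      rcases hx' with hfar | hnear
      · left
        have : dist u v₁ ≤ θ * r := le_of_lt (lt_of_le_of_lt (le_max_right _ _) hmax)
        exact this.trans (mul_le_mul_of_nonneg_left hfar hθ0.le)
      · right
        have : s ≤ θ * dist u v₁ := le_of_lt (lt_of_lt_of_le hmin
          (mul_le_mul_of_nonneg_left (min_le_right _ _) hθ0.le))
        linarith
    have htri₁a : t - dist u u₁ ≤ dist u₁ x := by
      have := dist_triangle u u₁ x; linarith
    have htri₁b : dist u u₁ - t ≤ dist u₁ x := by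
      have := dist_triangle u x u₁
      rw [dist_comm x u₁] at this; linarith
    have htri₂a : t - dist u v₁ ≤ dist v₁ x := by
      have := dist_triangle u v₁ x; linarith
    have htri₂b : dist u v₁ - t ≤ dist v₁ x := by
      have := dist_triangle u x v₁
      rw [dist_comm x v₁] at this; linarith
    have key₁ : (1 - δ) * (t + dist u u₁) ≤ dist u₁ x :=
      key_arith δ θ t (dist u u₁) (dist u₁ x) hδ0 hδ1 hθ0 h2θ htnn hd₁nn htri₁a htri₁b hor₁
    have key₂ : (1 - δ) * (t + dist u v₁) ≤ dist v₁ x :=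
      key_arith δ θ t (dist u v₁) (dist v₁ x) hδ0 hδ1 hθ0 h2θ htnn hd₂nn htri₂a htri₂b hor₂
    have hhux := abs_le.mp (hh u x)
    rw [← htdef] at hhux
    have hp₀ : (0:ℝ) ≤ (1 - δ) * t := mul_nonneg hδ1' htnn
    have hp₁ : (0:ℝ) ≤ (1 - δ) * dist u u₁ := mul_nonneg hδ1' hd₁nn
    have hp₂ : (0:ℝ) ≤ (1 - δ) * dist u v₁ := mul_nonneg hδ1' hd₂nn
    have hp₃ : (0:ℝ) ≤ (1 - δ) * dist u₁ v₁ := mul_nonneg hδ1' hDnn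
    have hexp₁ : (1 - δ) * (t + dist u u₁) = (1 - δ) * t + (1 - δ) * dist u u₁ := by ring
    have hexp₂ : (1 - δ) * (t + dist u v₁) = (1 - δ) * t + (1 - δ) * dist u v₁ := by ring
    have I1 : |a - h x| ≤ dist u₁ x := by
      rw [abs_le, ha]
      constructor <;> linarith
    have hDd : |dist u u₁ - dist u₁ v₁| ≤ dist u v₁ := by
      have := abs_dist_sub_le u v₁ u₁
      rwa [dist_comm v₁ u₁] at this
    have hDd' := abs_le.mp hDd
    have hm1 : (1 - δ) * (dist u u₁ - dist u₁ v₁) ≤ (1 - δ) * dist u v₁ :=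
      mul_le_mul_of_nonneg_left hDd'.2 hδ1'
    have hm2 : (1 - δ) * (-(dist u v₁)) ≤ (1 - δ) * (dist u u₁ - dist u₁ v₁) :=
      mul_le_mul_of_nonneg_left hDd'.1 hδ1'
    have hexp₃ : (1 - δ) * (dist u u₁ - dist u₁ v₁) =
        (1 - δ) * dist u u₁ - (1 - δ) * dist u₁ v₁ := by ring
    have hexp₄ : (1 - δ) * (-(dist u v₁)) = -((1 - δ) * dist u v₁) := by ring
    have I2 : |b - h x| ≤ dist v₁ x := by
      rw [abs_le, hb, ha]
      constructor <;> linarith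
    have I1' := abs_le.mp I1
    have I2' := abs_le.mp I2
    simp only [hf]
    rw [max_eq_left (by linarith [I1'.1] : a - dist u₁ x ≤ h x),
      max_eq_left (by linarith [I2'.1] : b - dist v₁ x ≤ h x),
      min_eq_left (by linarith [I1'.2] : h x ≤ a + dist u₁ x),
      min_eq_left (by linarith [I2'.2] : h x ≤ b + dist v₁ x)]
  -- value at u₁
  have hu₁a : h u₁ ≤ a := by
    have := (abs_le.mp (hh u₁ u)).2
    rw [dist_comm u₁ u] at this
    linarith
  have hfu₁ : f u₁ = a := by
    simp only [hf]
    rw [dist_self, dist_comm v₁ u₁]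
    rw [sub_zero, add_zero]
    rw [max_eq_right hu₁a,
      max_eq_left (by linarith : b - dist u₁ v₁ ≤ a),
      min_self,
      min_eq_left (by
        have h1 : (0:ℝ) ≤ δ * dist u₁ v₁ := mul_nonneg hδ0.le hDnn
        have h2 : (1 - δ) * dist u₁ v₁ = dist u₁ v₁ - δ * dist u₁ v₁ := by ring
        rw [hb]; linarith : a ≤ b + dist u₁ v₁)]
  -- value at v₁
  have hfv₁ : f v₁ = b := by
    simp only [hf]
    rw [dist_self, sub_zero, add_zero]
    refine min_eq_right (le_min (le_max_right _ _) (by linarith))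
  exact ⟨f, hfLip, hoff, hfu₁, by rw [hfv₁, hfu₁], by rw [hfv₁, hfu₁]; ring⟩
end
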